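/- arXiv:1803.06636 — 6 statements merged into one kernel-verified Lean document; each statement's English description precedes it below -/
import Mathlib

section
/- For every n ≥ 1, the super Catalan number S(m,n) := (2m)!(2n)!/(m! n! (m+n)!) is an integer for all m, n ≥ 0. -/
private def Srat (m n : ℕ) : ℚ :=
  ((2 * m).factorial * (2 * n).factorial : ℚ) /
    (m.factorial * n.factorial * (m + n).factorial)

private lemma Srat_denom_pos (m n : ℕ) :
    (0 : ℚ) < (m.factorial * n.factorial * (m + n).factorial : ℚ) := by
  positivity

private lemma Srat_nonneg (m n : ℕ) : 0 ≤ Srat m n := by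
  unfold Srat
  positivity

private lemma Srat_identity (m n : ℕ) :
    Srat (m + 1) n = 4 * Srat m n - Srat m (n + 1) := by
  unfold Srat
  have h1 : (2 * (m + 1)) = (2 * m + 1) + 1 := by ring
  have h2 : (2 * (n + 1)) = (2 * n + 1) + 1 := by ring
  have hmn : (m + 1 + n) = (m + n) + 1 := by ring
  have hmn2 : (m + (n + 1)) = (m + n) + 1 := by ring
  simp only [h1, h2, hmn, hmn2, Nat.factorial_succ]
  push_cast
  have hm : (m.factorial : ℚ) ≠ 0 := by positivity
  have hn : (n.factorial : ℚ) ≠ 0 := by positivity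
  have hmnf : ((m + n).factorial : ℚ) ≠ 0 := by positivity
  have hm1 : ((m : ℚ) + 1) ≠ 0 := by positivity
  have hn1 : ((n : ℚ) + 1) ≠ 0 := by positivity
  have hmn1 : ((m : ℚ) + (n : ℚ) + 1) ≠ 0 := by positivity
  field_simp
  ring

private lemma Srat_int (m n : ℕ) : ∃ z : ℤ, Srat m n = (z : ℚ) := by
  induction m generalizing n with
  | zero =>
    refine ⟨Nat.choose (2 * n) n, ?_⟩
    unfold Srat
    have h := Nat.choose_mul_factorial_mul_factorial (show n ≤ 2 * n by omega)
    have h2n : 2 * n - n = n := by omega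
    rw [h2n] at h
    have : ((2 * n).factorial : ℚ) =
        (Nat.choose (2 * n) n : ℚ) * n.factorial * n.factorial := by
      exact_mod_cast h.symm
    rw [mul_zero, Nat.zero_add, Nat.factorial_zero, this]
    have hn : (n.factorial : ℚ) ≠ 0 := by positivity
    push_cast
    field_simp
  | succ m ih =>
    obtain ⟨z1, h1⟩ := ih n
    obtain ⟨z2, h2⟩ := ih (n + 1)
    exact ⟨4 * z1 - z2, by rw [Srat_identity, h1, h2]; push_cast; ring⟩

theorem superCatalan_integer (m n : ℕ) :
    ∃ k : ℕ, ((2 * m).factorial * (2 * n).factorial : ℚ) /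
        (m.factorial * n.factorial * (m + n).factorial) = (k : ℚ) := by
  obtain ⟨z, hz⟩ := Srat_int m n
  have hnn : (0 : ℚ) ≤ z := hz ▸ Srat_nonneg m n
  have hz0 : 0 ≤ z := by exact_mod_cast hnn
  exact ⟨z.toNat, by rw [show ((z.toNat : ℕ) : ℚ) = (z : ℚ) by
    exact_mod_cast Int.toNat_of_nonneg hz0]; exact hz⟩
end

section
/- The von Szily identity: for all nonnegative integers m, n, (2m)!(2n)!/(m! n! (m+n)!) = ∑_{k∈ℤ} (−1)^k C(2m, m+k) C(2n, n+k). -/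
/-- Binomial coefficient `C(a, b)` with an integer lower argument,
equal to `0` when `b < 0` or `b > a`. -/
def chooseInt (a : ℕ) (b : ℤ) : ℤ :=
  if 0 ≤ b then a.choose b.toNat else 0

lemma chooseInt_of_neg {a : ℕ} {b : ℤ} (h : b < 0) : chooseInt a b = 0 := by
  simp [chooseInt, not_le.mpr h]

lemma chooseInt_of_gt {a : ℕ} {b : ℤ} (h : (a : ℤ) < b) : chooseInt a b = 0 := by
  unfold chooseInt
  rw [if_pos (by omega), Nat.choose_eq_zero_of_lt (by omega)]
  simp

lemma chooseInt_succ (a : ℕ) (b : ℤ) :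
    chooseInt (a + 1) b = chooseInt a b + chooseInt a (b - 1) := by
  rcases lt_trichotomy b 0 with h | h | h
  · rw [chooseInt_of_neg h, chooseInt_of_neg h, chooseInt_of_neg (by omega)]; ring
  · subst h; simp [chooseInt]
  · obtain ⟨c, rfl⟩ : ∃ c : ℕ, b = (c : ℤ) + 1 := ⟨(b - 1).toNat, by omega⟩
    unfold chooseInt
    rw [if_pos (by omega), if_pos (by omega), if_pos (by omega)]
    have h1 : ((c : ℤ) + 1).toNat = c + 1 := by omega
    have h2 : ((c : ℤ) + 1 - 1).toNat = c := by omega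
    rw [h1, h2, Nat.choose_succ_succ]
    push_cast; ring

lemma chooseInt_two_step (a : ℕ) (b : ℤ) :
    chooseInt (a + 1 + 1) b = chooseInt a b + 2 * chooseInt a (b - 1) + chooseInt a (b - 2) := by
  rw [chooseInt_succ, chooseInt_succ, chooseInt_succ, show b - 1 - 1 = b - 2 from by ring]
  ring

noncomputable def T' (m n M : ℕ) : ℚ :=
  ∑ k ∈ Finset.Icc (-(M : ℤ)) (M : ℤ),
    (-1 : ℚ) ^ k * chooseInt (2 * m) (m + k) * chooseInt (2 * n) (n + k)

noncomputable def gfun (m n : ℕ) : ℤ → ℚ := fun k =>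
  (-1 : ℚ) ^ k * chooseInt (2 * m) (m + k) * chooseInt (2 * n) (n + k - 1)

noncomputable def hfun (m n : ℕ) : ℤ → ℚ := fun k =>
  (-1 : ℚ) ^ k * chooseInt (2 * m) (m + k - 1) * chooseInt (2 * n) (n + k)

lemma pointwise (m n : ℕ) (k : ℤ) :
    (-1 : ℚ) ^ k * chooseInt (2 * (m + 1)) (m + 1 + k) * chooseInt (2 * n) (n + k)
      + (-1 : ℚ) ^ k * chooseInt (2 * m) (m + k) * chooseInt (2 * (n + 1)) (n + 1 + k)
    = 4 * ((-1 : ℚ) ^ k * chooseInt (2 * m) (m + k) * chooseInt (2 * n) (n + k))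
      + (gfun m n k - gfun m n (k + 1)) + (hfun m n k - hfun m n (k + 1)) := by
  simp only [gfun, hfun]
  have e1 : 2 * (m + 1) = 2 * m + 1 + 1 := by ring
  have e2 : 2 * (n + 1) = 2 * n + 1 + 1 := by ring
  rw [e1, e2, chooseInt_two_step, chooseInt_two_step]
  rw [show (m : ℤ) + (k + 1) = (m : ℤ) + 1 + k from by ring,
      show (n : ℤ) + (k + 1) = (n : ℤ) + 1 + k from by ring,
      show (m : ℤ) + 1 + k = (m : ℤ) + k + 1 from by ring,
      show (n : ℤ) + 1 + k = (n : ℤ) + k + 1 from by ring,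
      show (m : ℤ) + k + 1 - 1 = (m : ℤ) + k from by ring,
      show (n : ℤ) + k + 1 - 1 = (n : ℤ) + k from by ring,
      show (m : ℤ) + k + 1 - 2 = (m : ℤ) + k - 1 from by ring,
      show (n : ℤ) + k + 1 - 2 = (n : ℤ) + k - 1 from by ring,
      zpow_add_one₀ (by norm_num : (-1 : ℚ) ≠ 0)]
  push_cast
  ring

lemma shift_sum (g : ℤ → ℚ) (M : ℕ) (h1 : g (-(M : ℤ)) = 0) (h2 : g ((M : ℤ) + 1) = 0) :
    ∑ k ∈ Finset.Icc (-(M : ℤ)) (M : ℤ), g (k + 1)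
      = ∑ k ∈ Finset.Icc (-(M : ℤ)) (M : ℤ), g k := by
  have e : ∑ k ∈ Finset.Icc (-(M : ℤ)) (M : ℤ), g (k + 1)
      = ∑ k ∈ Finset.Icc (-(M : ℤ) + 1) ((M : ℤ) + 1), g k := by
    rw [← Finset.map_add_right_Icc _ _ 1, Finset.sum_map]
    rfl
  rw [e]
  rw [Finset.sum_subset (Finset.Icc_subset_Icc (by omega) (le_refl _) :
        Finset.Icc (-(M : ℤ) + 1) ((M : ℤ) + 1) ⊆ Finset.Icc (-(M : ℤ)) ((M : ℤ) + 1)),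
      Finset.sum_subset (Finset.Icc_subset_Icc (le_refl _) (by omega) :
        Finset.Icc (-(M : ℤ)) (M : ℤ) ⊆ Finset.Icc (-(M : ℤ)) ((M : ℤ) + 1))]
  · intro x hx hx'
    simp only [Finset.mem_Icc] at hx hx'
    have : x = (M : ℤ) + 1 := by omega
    rwa [this]
  · intro x hx hx'
    simp only [Finset.mem_Icc] at hx hx'
    have : x = -(M : ℤ) := by omega
    rwa [this]

lemma T_rec (m n M : ℕ) (hm : m + 1 ≤ M) (hn : n + 1 ≤ M) :
    T' (m + 1) n M + T' m (n + 1) M = 4 * T' m n M := by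
  have hg1 : gfun m n (-(M : ℤ)) = 0 := by
    simp only [gfun]
    rw [chooseInt_of_neg (show (m : ℤ) + -(M : ℤ) < 0 by omega)]
    ring
  have hg2 : gfun m n ((M : ℤ) + 1) = 0 := by
    simp only [gfun]
    rw [chooseInt_of_gt (show ((2 * m : ℕ) : ℤ) < (m : ℤ) + ((M : ℤ) + 1) by push_cast; omega)]
    ring
  have hh1 : hfun m n (-(M : ℤ)) = 0 := by
    simp only [hfun]
    rw [chooseInt_of_neg (show (m : ℤ) + -(M : ℤ) - 1 < 0 by omega)]
    ring
  have hh2 : hfun m n ((M : ℤ) + 1) = 0 := by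
    simp only [hfun]
    rw [chooseInt_of_gt (show ((2 * n : ℕ) : ℤ) < (n : ℤ) + ((M : ℤ) + 1) by push_cast; omega)]
    ring
  unfold T'
  rw [← Finset.sum_add_distrib]
  have key : ∀ k ∈ Finset.Icc (-(M : ℤ)) (M : ℤ),
      (-1 : ℚ) ^ k * chooseInt (2 * (m + 1)) (((m + 1 : ℕ) : ℤ) + k) * chooseInt (2 * n) (n + k)
        + (-1 : ℚ) ^ k * chooseInt (2 * m) (m + k) * chooseInt (2 * (n + 1)) (((n + 1 : ℕ) : ℤ) + k)
      = 4 * ((-1 : ℚ) ^ k * chooseInt (2 * m) (m + k) * chooseInt (2 * n) (n + k))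
        + (gfun m n k - gfun m n (k + 1)) + (hfun m n k - hfun m n (k + 1)) := by
    intro k _
    have h := pointwise m n k
    push_cast at h ⊢
    exact h
  rw [Finset.sum_congr rfl key, Finset.sum_add_distrib, Finset.sum_add_distrib,
      Finset.sum_sub_distrib, Finset.sum_sub_distrib, ← Finset.mul_sum,
      shift_sum (gfun m n) M hg1 hg2, shift_sum (hfun m n) M hh1 hh2]
  ring

lemma term_eq_zero {m n : ℕ} {k : ℤ} (h : (m : ℤ) < k ∨ k < -(m : ℤ)) :
    (-1 : ℚ) ^ k * chooseInt (2 * m) (m + k) * chooseInt (2 * n) (n + k) = 0 := by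
  rcases h with h | h
  · rw [chooseInt_of_gt (show ((2 * m : ℕ) : ℤ) < (m : ℤ) + k by push_cast; omega)]; simp
  · rw [chooseInt_of_neg (show (m : ℤ) + k < 0 by omega)]; simp

lemma T'_mono {m : ℕ} (n : ℕ) {M M' : ℕ} (h1 : m ≤ M) (h2 : M ≤ M') :
    T' m n M = T' m n M' := by
  unfold T'
  apply Finset.sum_subset
  · apply Finset.Icc_subset_Icc <;> omega
  · intro k hk hk'
    simp only [Finset.mem_Icc] at hk hk'
    push_neg at hk'
    exact term_eq_zero (by omega)

lemma T'_base (n : ℕ) : T' 0 n n = (Nat.choose (2 * n) n : ℚ) := by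
  unfold T'
  rw [Finset.sum_eq_single 0]
  · simp [chooseInt]
  · intro k hk hk0
    simp only [Nat.cast_zero, zero_add, Nat.mul_zero]
    rcases lt_trichotomy k 0 with h | h | h
    · rw [chooseInt_of_neg h]; simp
    · exact absurd h hk0
    · rw [chooseInt_of_gt (show ((2 * 0 : ℕ) : ℤ) < k by push_cast; omega)]; simp
  · intro h
    exact absurd (Finset.mem_Icc.mpr ⟨by omega, by omega⟩) h

lemma Sq_rec (m n : ℕ) :
    ((2 * (m + 1)).factorial * (2 * n).factorial : ℚ) /
        ((m + 1).factorial * n.factorial * ((m + 1) + n).factorial)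
      + ((2 * m).factorial * (2 * (n + 1)).factorial : ℚ) /
        (m.factorial * (n + 1).factorial * (m + (n + 1)).factorial)
    = 4 * (((2 * m).factorial * (2 * n).factorial : ℚ) /
        (m.factorial * n.factorial * (m + n).factorial)) := by
  have e1 : (2 * (m + 1)) = (2 * m) + 1 + 1 := by ring
  have e2 : (2 * (n + 1)) = (2 * n) + 1 + 1 := by ring
  have e3 : (m + 1) + n = (m + n) + 1 := by ring
  have e4 : m + (n + 1) = (m + n) + 1 := by ring
  rw [e1, e2, e3, e4, Nat.factorial_succ ((2*m)+1), Nat.factorial_succ (2*m),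
      Nat.factorial_succ ((2*n)+1), Nat.factorial_succ (2*n),
      Nat.factorial_succ (m+n), Nat.factorial_succ m, Nat.factorial_succ n]
  have h1 : (m.factorial : ℚ) ≠ 0 := Nat.cast_ne_zero.mpr (Nat.factorial_ne_zero m)
  have h2 : (n.factorial : ℚ) ≠ 0 := Nat.cast_ne_zero.mpr (Nat.factorial_ne_zero n)
  have h3 : ((m+n).factorial : ℚ) ≠ 0 := Nat.cast_ne_zero.mpr (Nat.factorial_ne_zero _)
  have h4 : ((m : ℚ) + 1) ≠ 0 := by positivity
  have h5 : ((n : ℚ) + 1) ≠ 0 := by positivity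
  have h6 : ((m : ℚ) + (n : ℚ) + 1) ≠ 0 := by positivity
  push_cast
  field_simp
  ring

lemma main_aux (m : ℕ) : ∀ n : ℕ,
    ((2 * m).factorial * (2 * n).factorial : ℚ) /
        (m.factorial * n.factorial * (m + n).factorial) = T' m n (m + n) := by
  induction m with
  | zero =>
    intro n
    rw [show (0 : ℕ) + n = n from by omega, T'_base n]
    rw [← Nat.choose_mul_factorial_mul_factorial (show n ≤ 2 * n by omega),
        show 2 * n - n = n from by omega]
    have h2 : (n.factorial : ℚ) ≠ 0 := Nat.cast_ne_zero.mpr (Nat.factorial_ne_zero n)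
    push_cast
    rw [Nat.factorial_zero]
    field_simp
  | succ m ih =>
    intro n
    have h1 := ih n
    have h2 := ih (n + 1)
    have hrec := Sq_rec m n
    have e1 : T' m n (m + n) = T' m n (m + n + 2) := T'_mono n (by omega) (by omega)
    have e2 : T' m (n + 1) (m + (n + 1)) = T' m (n + 1) (m + n + 2) :=
      T'_mono (n + 1) (by omega) (by omega)
    have trec := T_rec m n (m + n + 2) (by omega) (by omega)
    have e3 : T' (m + 1) n ((m + 1) + n) = T' (m + 1) n (m + n + 2) :=
      T'_mono n (by omega) (by omega)
    rw [e3]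
    linarith

theorem von_szily_identity (m n : ℕ) :
    ((2 * m).factorial * (2 * n).factorial : ℚ) /
        (m.factorial * n.factorial * (m + n).factorial) =
      ∑ k ∈ Finset.Icc (-(m : ℤ) - n) ((m : ℤ) + n),
        (-1 : ℚ) ^ k * chooseInt (2 * m) (m + k) * chooseInt (2 * n) (n + k) := by
  have h := main_aux m n
  rw [h]
  unfold T'
  congr 1
  rw [show (-((m + n : ℕ) : ℤ)) = -(m : ℤ) - n from by push_cast; ring,
      show (((m + n : ℕ)) : ℤ) = (m : ℤ) + n from by push_cast; ring]
end

section
/- The super Catalan numbers satisfy Gessel's recurrence: for all m, ℓ ≥ 0, S(m, m+ℓ) = ∑_{k=0}^{⌊ℓ/2⌋} 2^{ℓ−2k} C(ℓ, 2k) S(m, k), where S(m,n) = (2m)!(2n)!/(m! n! (m+n)!). -/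
def superCatalan (m n : ℕ) : ℚ :=
  ((2 * m).factorial * (2 * n).factorial : ℚ) /
    (m.factorial * n.factorial * (m + n).factorial)

lemma sc_rec1 (m n : ℕ) :
    superCatalan m (n + 1) = 4 * superCatalan m n - superCatalan (m + 1) n := by
  unfold superCatalan
  rw [show 2 * (n + 1) = (2 * n + 1) + 1 from by ring,
      show 2 * (m + 1) = (2 * m + 1) + 1 from by ring,
      show m + (n + 1) = (m + n) + 1 from by ring,
      show m + 1 + n = (m + n) + 1 from by ring]
  rw [Nat.factorial_succ (2 * n + 1), Nat.factorial_succ (2 * n),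
      Nat.factorial_succ (2 * m + 1), Nat.factorial_succ (2 * m),
      Nat.factorial_succ (m + n), Nat.factorial_succ n, Nat.factorial_succ m]
  push_cast
  field_simp
  ring

lemma sc_rec2 (m k : ℕ) :
    superCatalan (m + 1) k = 4 * superCatalan m k - superCatalan m (k + 1) := by
  have := sc_rec1 m k; linarith

lemma sc_symm (m n : ℕ) : superCatalan m n = superCatalan n m := by
  unfold superCatalan
  rw [add_comm n m]
  ring

lemma sc_diag (m : ℕ) : superCatalan m m = superCatalan m 0 := by
  unfold superCatalan
  have h : ((2 * m).factorial : ℚ) ≠ 0 := by exact_mod_cast (2 * m).factorial_ne_zero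
  simp only [mul_zero, Nat.factorial_zero, add_zero, Nat.cast_one]
  rw [div_eq_div_iff (by positivity) (by positivity)]
  push_cast
  ring



lemma choose_key (ℓ i : ℕ) :
    (ℓ + 2).choose (2 * i + 2) + ℓ.choose (2 * i + 2)
      = 2 * (ℓ + 1).choose (2 * i + 2) + ℓ.choose (2 * i) := by
  have h1 : (ℓ + 2).choose (2 * i + 2)
      = (ℓ + 1).choose (2 * i + 1) + (ℓ + 1).choose (2 * i + 2) :=
    Nat.choose_succ_succ' (ℓ + 1) (2 * i + 1)
  have h2 : (ℓ + 1).choose (2 * i + 1) = ℓ.choose (2 * i) + ℓ.choose (2 * i + 1) :=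
    Nat.choose_succ_succ' ℓ (2 * i)
  have h3 : (ℓ + 1).choose (2 * i + 2) = ℓ.choose (2 * i + 1) + ℓ.choose (2 * i + 2) :=
    Nat.choose_succ_succ' ℓ (2 * i + 1)
  omega

lemma smooth (e M : ℕ) (hM : e / 2 + 1 ≤ M) (b : ℕ → ℚ) :
    (∑ k ∈ Finset.range (e / 2 + 1), (2 : ℚ) ^ (e - 2 * k) * (e.choose (2 * k)) * b k)
      = ∑ k ∈ Finset.range M, (2 : ℚ) ^ e / 4 ^ k * (e.choose (2 * k)) * b k := by
  rw [← Finset.sum_subset (Finset.range_subset_range.mpr hM)]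
  · apply Finset.sum_congr rfl
    intro k hk
    have h2k : 2 * k ≤ e := by
      have := Finset.mem_range.mp hk; omega
    have h4 : (2 : ℚ) ^ (e - 2 * k) = 2 ^ e / 4 ^ k := by
      rw [show (4 : ℚ) ^ k = 2 ^ (2 * k) from by rw [pow_mul]; norm_num,
          eq_div_iff (by positivity), ← pow_add]
      congr 1
      omega
    rw [h4]
  · intro k hk1 hk2
    have : e < 2 * k := by
      simp only [Finset.mem_range, not_lt] at hk2
      omega
    rw [Nat.choose_eq_zero_of_lt this]
    simp


lemma sum_key (a : ℕ → ℚ) (ℓ : ℕ) :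
    (∑ k ∈ Finset.range ((ℓ + 2) / 2 + 1),
        (2 : ℚ) ^ (ℓ + 2 - 2 * k) * ((ℓ + 2).choose (2 * k)) * a k)
      = 4 * (∑ k ∈ Finset.range ((ℓ + 1) / 2 + 1),
            (2 : ℚ) ^ (ℓ + 1 - 2 * k) * ((ℓ + 1).choose (2 * k)) * a k)
        - ∑ k ∈ Finset.range (ℓ / 2 + 1),
            (2 : ℚ) ^ (ℓ - 2 * k) * (ℓ.choose (2 * k)) * (4 * a k - a (k + 1)) := by
  set N := ℓ / 2 + 2 with hN
  -- split third sum
  have hsplit : (∑ k ∈ Finset.range (ℓ / 2 + 1),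
      (2 : ℚ) ^ (ℓ - 2 * k) * (ℓ.choose (2 * k)) * (4 * a k - a (k + 1)))
      = 4 * (∑ k ∈ Finset.range (ℓ / 2 + 1),
            (2 : ℚ) ^ (ℓ - 2 * k) * (ℓ.choose (2 * k)) * a k)
        - ∑ k ∈ Finset.range (ℓ / 2 + 1),
            (2 : ℚ) ^ (ℓ - 2 * k) * (ℓ.choose (2 * k)) * a (k + 1) := by
    rw [Finset.mul_sum, ← Finset.sum_sub_distrib]
    apply Finset.sum_congr rfl
    intro k _
    ring
  rw [hsplit]
  rw [smooth (ℓ + 2) (N + 1) (by omega) a,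
      smooth (ℓ + 1) (N + 1) (by omega) a,
      smooth ℓ (N + 1) (by omega) a,
      smooth ℓ N (by omega) (fun k => a (k + 1))]
  -- reindex the shifted sum
  set G : ℕ → ℚ := fun j =>
    if j = 0 then 0 else (2 : ℚ) ^ ℓ / 4 ^ (j - 1) * (ℓ.choose (2 * (j - 1))) * a j with hG
  have hshift : (∑ k ∈ Finset.range N,
      (2 : ℚ) ^ ℓ / 4 ^ k * (ℓ.choose (2 * k)) * (fun k => a (k + 1)) k)
      = ∑ j ∈ Finset.range (N + 1), G j := by
    rw [Finset.sum_range_succ' G N]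
    simp [hG]
  rw [hshift]
  -- now everything over range (N+1): move to sum of sums and compare termwise
  rw [Finset.mul_sum, Finset.mul_sum, ← Finset.sum_sub_distrib, ← Finset.sum_sub_distrib]
  apply Finset.sum_congr rfl
  intro k _
  rcases k with _ | i
  · simp [hG]
    ring
  · simp only [hG]
    rw [if_neg (Nat.succ_ne_zero i)]
    have key : ((ℓ + 2).choose (2 * i + 2) : ℚ) + ℓ.choose (2 * i + 2)
        = 2 * (ℓ + 1).choose (2 * i + 2) + ℓ.choose (2 * i) := by
      exact_mod_cast choose_key ℓ i
    have h2i : 2 * (i + 1) = 2 * i + 2 := by ring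
    rw [h2i]
    simp only [Nat.add_sub_cancel]
    field_simp
    linear_combination ((2:ℚ) ^ ℓ * 4 ^ i * a (i + 1) * 4) * key


theorem gessel_recurrence (m ℓ : ℕ) :
    superCatalan m (m + ℓ) =
      ∑ k ∈ Finset.range (ℓ / 2 + 1),
        (2 : ℚ) ^ (ℓ - 2 * k) * (ℓ.choose (2 * k)) * superCatalan m k := by
  induction ℓ using Nat.strong_induction_on generalizing m with
  | _ ℓ ih =>
  match ℓ with
  | 0 =>
    simpa using sc_diag m
  | 1 =>
    have h1 := sc_rec1 m m
    have h2 := sc_symm (m + 1) m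
    have h3 := sc_diag m
    norm_num [Finset.sum_range_one]
    linarith
  | (ℓ + 2) =>
    have e1 := ih (ℓ + 1) (by omega) m
    have e2 := ih ℓ (by omega) (m + 1)
    rw [show m + (ℓ + 2) = (m + (ℓ + 1)) + 1 from rfl, sc_rec1, e1,
        show m + (ℓ + 1) = (m + 1) + ℓ from by omega, e2]
    simp only [sc_rec2]
    linear_combination - sum_key (superCatalan m) ℓ
end

section
/- The number of permutations of {1,…,n} avoiding all three patterns 123, 132, and 213 equals the Fibonacci number F_{n+1} (with F₁ = F₂ = 1), for all n ≥ 1. -/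
/-- `σ` contains the pattern 123. -/
def contains123 {n : ℕ} (σ : Equiv.Perm (Fin n)) : Prop :=
  ∃ i j k : Fin n, i < j ∧ j < k ∧ σ i < σ j ∧ σ j < σ k

/-- `σ` contains the pattern 132. -/
def contains132 {n : ℕ} (σ : Equiv.Perm (Fin n)) : Prop :=
  ∃ i j k : Fin n, i < j ∧ j < k ∧ σ i < σ k ∧ σ k < σ j

/-- `σ` contains the pattern 213. -/
def contains213 {n : ℕ} (σ : Equiv.Perm (Fin n)) : Prop :=
  ∃ i j k : Fin n, i < j ∧ j < k ∧ σ j < σ i ∧ σ i < σ k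

open Equiv

/-- the "gap-increasing" condition. -/
def Cc {n : ℕ} (σ : Equiv.Perm (Fin n)) : Prop :=
  ∀ x y : Fin n, (x : ℕ) + 2 ≤ (y : ℕ) → σ x < σ y

lemma cc_L1 {n : ℕ} (τ : Equiv.Perm (Fin n)) :
    Cc (Equiv.Perm.decomposeFin.symm (0, τ)) ↔ Cc τ := by
  set σ := Equiv.Perm.decomposeFin.symm (0, τ) with hσ
  have hz : σ 0 = 0 := Equiv.Perm.decomposeFin_symm_apply_zero 0 τ
  have hs : ∀ i : Fin n, σ i.succ = (τ i).succ := by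
    intro i
    rw [hσ, Equiv.Perm.decomposeFin_symm_apply_succ, Equiv.swap_self, Equiv.refl_apply]
  constructor
  · intro h i j hij
    have := h i.succ j.succ (by simp [Fin.val_succ]; omega)
    rw [hs, hs, Fin.succ_lt_succ_iff] at this
    exact this
  · intro h x y hxy
    rcases Fin.eq_zero_or_eq_succ y with rfl | ⟨j, rfl⟩
    · simp at hxy
    rcases Fin.eq_zero_or_eq_succ x with rfl | ⟨i, rfl⟩
    · rw [hz, hs]; exact Fin.succ_pos _
    · rw [hs, hs, Fin.succ_lt_succ_iff]
      exact h i j (by simp [Fin.val_succ] at hxy ⊢; omega)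

lemma vpos {m : ℕ} {v : Fin (m + 1)} (h : v ≠ 0) : 1 ≤ (v : ℕ) :=
  Nat.pos_of_ne_zero (fun hh => h (Fin.ext (by simpa using hh)))

lemma cc_L2 {n : ℕ} (τ : Equiv.Perm (Fin (n + 1))) :
    Cc (Equiv.Perm.decomposeFin.symm (1, τ)) ↔ (τ 0 = 0 ∧ Cc τ) := by
  set σ := Equiv.Perm.decomposeFin.symm ((1 : Fin (n+2)), τ) with hσ
  have hz : σ 0 = 1 := Equiv.Perm.decomposeFin_symm_apply_zero 1 τ
  have hs : ∀ i : Fin (n+1), σ i.succ = Equiv.swap 0 1 (τ i).succ := by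
    intro i; rw [hσ, Equiv.Perm.decomposeFin_symm_apply_succ]
  have hswap : ∀ v : Fin (n+2), (2:ℕ) ≤ v → Equiv.swap (0 : Fin (n+2)) 1 v = v := by
    intro v hv
    apply Equiv.swap_apply_of_ne_of_ne
    · intro h; subst h; simp at hv
    · intro h; subst h
      have : ((1:Fin (n+2)):ℕ) = 1 := by simp
      omega
  have hkey : ∀ i : Fin (n+1), τ i ≠ 0 → σ i.succ = (τ i).succ := by
    intro i hi
    rw [hs]
    exact hswap _ (by have := vpos hi; simp [Fin.val_succ]; omega)
  constructor
  · intro h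
    have ht0 : τ 0 = 0 := by
      by_contra h0
      set i := τ.symm 0 with hi
      have hti : τ i = 0 := τ.apply_symm_apply 0
      have hine : i ≠ 0 := by intro hh; rw [hh] at hti; exact h0 hti
      have hσi : σ i.succ = 0 := by
        rw [hs, hti]
        simp [Equiv.swap_apply_def]
      have hle : (0:ℕ) + 2 ≤ (i.succ : ℕ) := by
        have := vpos hine; simp [Fin.val_succ]; omega
      have := h 0 i.succ hle
      rw [hz, hσi] at this
      exact absurd this (by simp)
    refine ⟨ht0, ?_⟩
    intro i j hij
    have hjn0 : j ≠ 0 := by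
      intro hh; subst hh; simp at hij
    have hτj : τ j ≠ 0 := by
      intro hh; rw [← ht0] at hh; exact hjn0 (τ.injective hh)
    rcases Fin.eq_zero_or_eq_succ i with rfl | ⟨i', rfl⟩
    · rw [ht0]
      exact Fin.pos_of_ne_zero hτj
    · have hin0 : (i' : ℕ) + 1 ≠ 0 := by omega
      have hτi : τ i'.succ ≠ 0 := by
        intro hh; rw [← ht0] at hh
        exact (Fin.succ_ne_zero i') (τ.injective hh)
      have := h i'.succ.succ j.succ (by simp [Fin.val_succ] at hij ⊢; omega)
      rw [hkey _ hτi, hkey _ hτj, Fin.succ_lt_succ_iff] at this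
      exact this
  · rintro ⟨ht0, h⟩
    intro x y hxy
    rcases Fin.eq_zero_or_eq_succ y with rfl | ⟨j, rfl⟩
    · simp at hxy
    have hjne : j ≠ 0 := by
      intro hh; subst hh; simp [Fin.val_succ] at hxy
    have hτj : τ j ≠ 0 := by
      intro hh; rw [← ht0] at hh; exact hjne (τ.injective hh)
    rcases Fin.eq_zero_or_eq_succ x with rfl | ⟨i, rfl⟩
    · rw [hz, hkey _ hτj]
      have : (1:ℕ) < ((τ j).succ : ℕ) := by
        have := vpos hτj; rw [Fin.val_succ]; omega
      rwa [Fin.lt_iff_val_lt_val, Fin.val_one]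
    rcases Fin.eq_zero_or_eq_succ i with rfl | ⟨i', rfl⟩
    · have hσ1 : σ (0:Fin (n+1)).succ = 0 := by
        rw [hs, ht0]
        simp [Equiv.swap_apply_def]
      rw [hσ1, hkey _ hτj]
      exact Fin.succ_pos _
    · have hτi : τ i'.succ ≠ 0 := by
        intro hh; rw [← ht0] at hh; exact (Fin.succ_ne_zero i') (τ.injective hh)
      rw [hkey _ hτi, hkey _ hτj, Fin.succ_lt_succ_iff]
      exact h i'.succ j (by simp [Fin.val_succ] at hxy ⊢; omega)

lemma cc_zero_le_one {n : ℕ} (σ : Equiv.Perm (Fin (n+1))) (h : Cc σ) : (σ 0 : ℕ) ≤ 1 := by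
  by_contra h2
  push_neg at h2
  have hn2 : 1 < n + 1 := lt_of_le_of_lt (by omega : 1 ≤ (σ 0 : ℕ)) (σ 0).isLt
  set p := σ.symm 0 with hp
  set q := σ.symm ⟨1, hn2⟩ with hq
  have hσp : σ p = 0 := σ.apply_symm_apply 0
  have hσq : σ q = ⟨1, hn2⟩ := σ.apply_symm_apply _
  have hpv : (p : ℕ) ≤ 1 := by
    by_contra hc
    have := h 0 p (by simp; omega)
    rw [hσp] at this
    exact absurd this (by simp [Fin.lt_iff_val_lt_val])
  have hqv : (q : ℕ) ≤ 1 := by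
    by_contra hc
    have := h 0 q (by simp; omega)
    rw [hσq, Fin.lt_iff_val_lt_val] at this
    have hv1 : ((⟨1, hn2⟩ : Fin (n+1)) : ℕ) = 1 := rfl
    omega
  have hpne : p ≠ 0 := by
    intro hh; rw [hh] at hσp; rw [hσp] at h2; simp at h2
  have hqne : q ≠ 0 := by
    intro hh; rw [hh] at hσq; rw [hσq] at h2; simp at h2
  have : p = q := by
    apply Fin.ext
    have := vpos hpne
    have := vpos hqne
    omega
  rw [this, hσq] at hσp
  exact absurd (congrArg Fin.val hσp) (by simp)


lemma decomp_eq {n : ℕ} (σ : Equiv.Perm (Fin (n+1))) :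
    Equiv.Perm.decomposeFin.symm (σ 0, (Equiv.Perm.decomposeFin σ).2) = σ := by
  have hd := Equiv.symm_apply_apply Equiv.Perm.decomposeFin σ
  have hfst : (Equiv.Perm.decomposeFin σ).1 = σ 0 := by
    conv_rhs => rw [← hd]
    rw [← Prod.mk.eta (p := Equiv.Perm.decomposeFin σ)]
    rw [Equiv.Perm.decomposeFin_symm_apply_zero]
  rw [← hfst, Prod.mk.eta, hd]

/-- the sum map realizing the Fibonacci recursion. -/
def sumMap (n : ℕ) :
    ({τ : Equiv.Perm (Fin (n+1)) // Cc τ} ⊕ {τ : Equiv.Perm (Fin n) // Cc τ}) →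
      {σ : Equiv.Perm (Fin (n+2)) // Cc σ}
  | Sum.inl ⟨τ, h⟩ => ⟨Equiv.Perm.decomposeFin.symm (0, τ), (cc_L1 τ).mpr h⟩
  | Sum.inr ⟨τ, h⟩ => ⟨Equiv.Perm.decomposeFin.symm (1, Equiv.Perm.decomposeFin.symm (0, τ)),
      (cc_L2 _).mpr ⟨Equiv.Perm.decomposeFin_symm_apply_zero 0 τ, (cc_L1 τ).mpr h⟩⟩

lemma sumMap_bijective (n : ℕ) : Function.Bijective (sumMap n) := by
  constructor
  · rintro (⟨τ, hτ⟩ | ⟨τ, hτ⟩) (⟨ρ, hρ⟩ | ⟨ρ, hρ⟩) h <;>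
      simp only [sumMap, Subtype.mk.injEq] at h
    · have := Equiv.Perm.decomposeFin.symm.injective h
      simp only [Prod.mk.injEq] at this
      simp [this.2]
    · exfalso
      have := congrArg (fun f => f 0) h
      simp only [Equiv.Perm.decomposeFin_symm_apply_zero] at this
      exact absurd (congrArg Fin.val this) (by simp)
    · exfalso
      have := congrArg (fun f => f 0) h
      simp only [Equiv.Perm.decomposeFin_symm_apply_zero] at this
      exact absurd (congrArg Fin.val this) (by simp)
    · have h1 := Equiv.Perm.decomposeFin.symm.injective h
      simp only [Prod.mk.injEq] at h1
      have h2 := Equiv.Perm.decomposeFin.symm.injective h1.2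
      simp only [Prod.mk.injEq] at h2
      simp [h2.2]
  · rintro ⟨σ, hσ⟩
    have h0 := cc_zero_le_one σ hσ
    by_cases hc : (σ 0 : ℕ) = 0
    · have hσ0 : σ 0 = 0 := Fin.ext (by simpa using hc)
      have hτ : Equiv.Perm.decomposeFin.symm (0, (Equiv.Perm.decomposeFin σ).2) = σ := by
        rw [← hσ0]; exact decomp_eq σ
      refine ⟨Sum.inl ⟨(Equiv.Perm.decomposeFin σ).2, (cc_L1 _).mp (by rw [hτ]; exact hσ)⟩, ?_⟩
      exact Subtype.ext hτ
    · have h1 : (σ 0 : ℕ) = 1 := by omega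
      have hσ0 : σ 0 = 1 := Fin.ext (by simpa using h1)
      have hτ : Equiv.Perm.decomposeFin.symm (1, (Equiv.Perm.decomposeFin σ).2) = σ := by
        rw [← hσ0]; exact decomp_eq σ
      set τ := (Equiv.Perm.decomposeFin σ).2 with hτdef
      have hcc : τ 0 = 0 ∧ Cc τ := (cc_L2 _).mp (by rw [hτ]; exact hσ)
      have hτ2 : Equiv.Perm.decomposeFin.symm (0, (Equiv.Perm.decomposeFin τ).2) = τ := by
        rw [← hcc.1]; exact decomp_eq τ
      refine ⟨Sum.inr ⟨(Equiv.Perm.decomposeFin τ).2, (cc_L1 _).mp (by rw [hτ2]; exact hcc.2)⟩, ?_⟩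
      apply Subtype.ext
      show Equiv.Perm.decomposeFin.symm (1, Equiv.Perm.decomposeFin.symm (0, _)) = σ
      rw [hτ2, hτ]

lemma cc_card_rec (n : ℕ) :
    Nat.card {σ : Equiv.Perm (Fin (n+2)) // Cc σ} =
      Nat.card {τ : Equiv.Perm (Fin (n+1)) // Cc τ} +
        Nat.card {τ : Equiv.Perm (Fin n) // Cc τ} := by
  rw [← Nat.card_sum]
  exact (Nat.card_eq_of_bijective _ (sumMap_bijective n)).symm

lemma cc_card_small (n : ℕ) (hn : n ≤ 1) :
    Nat.card {σ : Equiv.Perm (Fin n) // Cc σ} = 1 := by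
  have hall : ∀ σ : Equiv.Perm (Fin n), Cc σ := by
    intro σ x y hxy
    exact absurd hxy (by have := y.isLt; omega)
  rw [Nat.card_congr (Equiv.subtypeUnivEquiv hall), Nat.card_eq_fintype_card,
    Fintype.card_perm, Fintype.card_fin]
  interval_cases n <;> rfl

lemma cc_card (n : ℕ) : Nat.card {σ : Equiv.Perm (Fin n) // Cc σ} = Nat.fib (n + 1) := by
  induction n using Nat.twoStepInduction with
  | zero => rw [cc_card_small 0 (by norm_num)]; rfl
  | one => rw [cc_card_small 1 (by norm_num)]; rfl
  | more n ih1 ih2 =>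
    rw [cc_card_rec, ih1, ih2]
    have := Nat.fib_add_two (n := n + 1)
    rw [show n + 2 + 1 = n + 1 + 2 from rfl]
    omega

lemma avoid_iff_D {n : ℕ} (σ : Equiv.Perm (Fin n)) :
    (¬contains123 σ ∧ ¬contains132 σ ∧ ¬contains213 σ) ↔
      ∀ i j : Fin n, (i : ℕ) + 2 ≤ (j : ℕ) → σ j < σ i := by
  constructor
  · rintro ⟨h1, h2, h3⟩ i j hij
    by_contra hc
    push_neg at hc
    have hne : σ i ≠ σ j := fun hh => by
      have := σ.injective hh
      subst this
      omega
    have hij' : σ i < σ j := lt_of_le_of_ne hc hne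
    have hk : (i : ℕ) + 1 < n := by have := j.isLt; omega
    set k : Fin n := ⟨(i : ℕ) + 1, hk⟩ with hkdef
    have hik : i < k := by simp [Fin.lt_iff_val_lt_val, hkdef]
    have hkj : k < j := by simp [Fin.lt_iff_val_lt_val, hkdef]; omega
    have hkne : σ k ≠ σ i := fun hh => by
      have := σ.injective hh
      rw [this] at hik
      exact lt_irrefl _ hik
    rcases lt_or_gt_of_ne hkne with hlt | hgt
    · exact h3 ⟨i, k, j, hik, hkj, hlt, hij'⟩
    · have hkne2 : σ k ≠ σ j := fun hh => by
        have := σ.injective hh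
        rw [this] at hkj
        exact lt_irrefl _ hkj
      rcases lt_or_gt_of_ne hkne2 with hlt2 | hgt2
      · exact h1 ⟨i, k, j, hik, hkj, hgt, hlt2⟩
      · exact h2 ⟨i, k, j, hik, hkj, hij', hgt2⟩
  · intro h
    refine ⟨?_, ?_, ?_⟩ <;> rintro ⟨i, j, k, hij, hjk, p1, p2⟩ <;>
      have hik : (i : ℕ) + 2 ≤ (k : ℕ) := by
        rw [Fin.lt_iff_val_lt_val] at hij hjk; omega
    · exact absurd (lt_trans p1 p2) (lt_asymm (h i k hik))
    · exact absurd p1 (lt_asymm (h i k hik))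
    · exact absurd p2 (lt_asymm (h i k hik))

lemma D_iff_cc {n : ℕ} (σ : Equiv.Perm (Fin n)) :
    (∀ i j : Fin n, (i : ℕ) + 2 ≤ (j : ℕ) → σ j < σ i) ↔ Cc (σ * Fin.revPerm) := by
  constructor
  · intro h x y hxy
    simp only [Equiv.Perm.mul_apply, Fin.revPerm_apply]
    apply h y.rev x.rev
    rw [Fin.val_rev, Fin.val_rev]
    have := x.isLt
    have := y.isLt
    omega
  · intro h i j hij
    have := h j.rev i.rev (by
      rw [Fin.val_rev, Fin.val_rev]
      have := i.isLt
      have := j.isLt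
      omega)
    simpa only [Equiv.Perm.mul_apply, Fin.revPerm_apply, Fin.rev_rev] using this

theorem avoid_123_132_213_eq_fibonacci (n : ℕ) (hn : 1 ≤ n) :
    Nat.card {σ : Equiv.Perm (Fin n) //
        ¬contains123 σ ∧ ¬contains132 σ ∧ ¬contains213 σ} = Nat.fib (n + 1) := by
  rw [← cc_card n]
  apply Nat.card_congr
  exact Equiv.subtypeEquiv (Equiv.mulRight Fin.revPerm)
    (fun σ => (avoid_iff_D σ).trans (D_iff_cc σ))
end

section
/- The number of permutations of {1,…,n} avoiding the pattern 213 equals the n-th Catalan number C_n = C(2n,n)/(n+1). -/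
open List

namespace Avoid213


def Av (l : List ℕ) : Prop :=
  ∀ x y z : ℕ, [x, y, z] <+ l → y < x → x < z → False

def L (n : ℕ) : Type := {l : List ℕ // l ~ List.range n ∧ Av l}

lemma triple_sublist {α : Type*} (l : List α) {i j k : ℕ} (hij : i < j) (hjk : j < k)
    (hk : k < l.length) :
    [l[i]'(by omega), l[j]'(by omega), l[k]] <+ l := by
  have hp : ([⟨i, by omega⟩, ⟨j, by omega⟩, ⟨k, hk⟩] : List (Fin l.length)).Pairwise (· < ·) := by
    simp only [List.pairwise_cons, List.mem_cons, List.mem_singleton, List.not_mem_nil]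
    refine ⟨?_, ?_, by simp, by simp⟩
    · rintro b (rfl | rfl | h) <;> first | (simp [Fin.mk_lt_mk]; omega) | simp at h
    · rintro b (rfl | h) <;> first | (simp [Fin.mk_lt_mk]; omega) | simp at h
  simpa using List.map_getElem_sublist hp

def toListP {n : ℕ} (σ : Equiv.Perm (Fin n)) : List ℕ :=
  (List.finRange n).map (fun i => (σ i : ℕ))

lemma toListP_length {n : ℕ} (σ : Equiv.Perm (Fin n)) : (toListP σ).length = n := by
  simp [toListP]

lemma toListP_getElem {n : ℕ} (σ : Equiv.Perm (Fin n)) (i : ℕ) (hi : i < n) :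
    (toListP σ)[i]'(by rw [toListP_length]; exact hi) = σ ⟨i, hi⟩ := by
  simp [toListP]

lemma toListP_perm {n : ℕ} (σ : Equiv.Perm (Fin n)) : toListP σ ~ List.range n := by
  have h1 : (List.finRange n).map σ ~ List.finRange n := by
    apply List.perm_of_nodup_nodup_toFinset_eq
    · exact ((List.nodup_finRange n).map σ.injective)
    · exact List.nodup_finRange n
    · ext i
      simp only [List.mem_toFinset, List.mem_map, List.mem_finRange, true_and, iff_true]
      exact ⟨σ.symm i, by simp⟩
  have h2 := h1.map (Fin.val)
  simpa [toListP, List.map_map, Function.comp_def] using h2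

lemma not_contains_iff_av {n : ℕ} (σ : Equiv.Perm (Fin n)) :
    ¬contains213 σ ↔ Av (toListP σ) := by
  constructor
  · intro h x y z hs hyx hxz
    obtain ⟨is, his, hpw⟩ := List.sublist_eq_map_getElem hs
    match is, his with
    | [a, b, c], his =>
      simp only [List.map_cons, List.map_nil, List.cons.injEq, and_true] at his
      obtain ⟨hx, hy, hz⟩ := his
      simp only [List.pairwise_cons, List.mem_cons, List.not_mem_nil, List.mem_singleton] at hpw
      have hab : a < b := hpw.1 b (Or.inl rfl)
      have hbc : b < c := hpw.2.1 c (Or.inl rfl)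
      have ha : (a : ℕ) < n := lt_of_lt_of_le a.isLt (le_of_eq (toListP_length σ))
      have hb : (b : ℕ) < n := lt_of_lt_of_le b.isLt (le_of_eq (toListP_length σ))
      have hc : (c : ℕ) < n := lt_of_lt_of_le c.isLt (le_of_eq (toListP_length σ))
      have hxv : x = σ ⟨a, ha⟩ := by rw [hx, Fin.getElem_fin, ← toListP_getElem σ a ha]
      have hyv : y = σ ⟨b, hb⟩ := by rw [hy, Fin.getElem_fin, ← toListP_getElem σ b hb]
      have hzv : z = σ ⟨c, hc⟩ := by rw [hz, Fin.getElem_fin, ← toListP_getElem σ c hc]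
      apply h
      exact ⟨⟨a, ha⟩, ⟨b, hb⟩, ⟨c, hc⟩, hab, hbc, by rw [Fin.lt_def]; omega,
        by rw [Fin.lt_def]; omega⟩
  · rintro h ⟨i, j, k, hij, hjk, h1, h2⟩
    have hk : (k : ℕ) < (toListP σ).length := by rw [toListP_length]; exact k.isLt
    have hs := triple_sublist (toListP σ) (i := i) (j := j) (k := k) hij hjk hk
    rw [toListP_getElem σ i i.isLt, toListP_getElem σ j j.isLt, toListP_getElem σ k k.isLt] at hs
    exact h _ _ _ hs h1 h2

noncomputable def permEquivL (n : ℕ) :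
    {σ : Equiv.Perm (Fin n) // ¬contains213 σ} ≃ L n := by
  apply Equiv.ofBijective
    (fun σ => (⟨toListP σ.1, toListP_perm σ.1, (not_contains_iff_av σ.1).mp σ.2⟩ : L n))
  constructor
  · rintro ⟨σ, hσ⟩ ⟨τ, hτ⟩ h
    simp only [Subtype.mk.injEq] at h
    refine Subtype.ext (Equiv.ext fun i => ?_)
    have h3 : (toListP σ)[(i:ℕ)]'(by rw [toListP_length]; exact i.isLt)
        = (toListP τ)[(i:ℕ)]'(by rw [toListP_length]; exact i.isLt) :=
      List.getElem_of_eq h _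
    rw [toListP_getElem σ i i.isLt, toListP_getElem τ i i.isLt] at h3
    exact Fin.ext (by simpa using h3)
  · rintro ⟨l, hl, hav⟩
    have hlen : l.length = n := by rw [hl.length_eq, List.length_range]
    have hbound : ∀ (i : ℕ) (hi : i < l.length), l[i] < n := by
      intro i hi
      have : l[i] ∈ l := List.getElem_mem _
      simpa using hl.subset this
    have hnd : l.Nodup := hl.nodup_iff.mpr List.nodup_range
    set g : Fin n → Fin n := fun i => ⟨l[(i:ℕ)]'(by omega), hbound _ _⟩ with hg
    have hginj : Function.Injective g := by
      intro i i' hii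
      have : l.get ⟨i, by omega⟩ = l.get ⟨i', by omega⟩ := by
        simpa [List.get_eq_getElem, hg, Fin.ext_iff] using hii
      have := List.nodup_iff_injective_get.mp hnd this
      exact Fin.ext (by simpa [Fin.ext_iff] using this)
    set σ : Equiv.Perm (Fin n) := Equiv.ofBijective g (Finite.injective_iff_bijective.mp hginj)
      with hσdef
    have hto : toListP σ = l := by
      apply List.ext_getElem (by rw [toListP_length, hlen])
      intro i h1 h2
      have hi : i < n := by rwa [toListP_length] at h1
      rw [toListP_getElem σ i hi]
      rfl
    refine ⟨⟨σ, (not_contains_iff_av σ).mpr (by rwa [hto])⟩, Subtype.ext hto⟩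





lemma av_sublist {l₁ l₂ : List ℕ} (hs : l₁ <+ l₂) (h : Av l₂) : Av l₁ :=
  fun x y z hxyz => h x y z (hxyz.trans hs)

lemma av_map_add {l : List ℕ} (c : ℕ) (h : Av l) : Av (l.map (· + c)) := by
  intro x y z hs hyx hxz
  rw [List.sublist_map_iff] at hs
  obtain ⟨s, hsl, hmap⟩ := hs
  match s, hmap with
  | [x', y', z'], hmap =>
    simp only [List.map_cons, List.map_nil, List.cons.injEq, and_true] at hmap
    obtain ⟨rfl, rfl, rfl⟩ := hmap
    exact h x' y' z' hsl (by omega) (by omega)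

lemma av_map_sub {l : List ℕ} (c : ℕ) (hc : ∀ x ∈ l, c ≤ x) (h : Av l) :
    Av (l.map (· - c)) := by
  intro x y z hs hyx hxz
  rw [List.sublist_map_iff] at hs
  obtain ⟨s, hsl, hmap⟩ := hs
  match s, hmap with
  | [x', y', z'], hmap =>
    simp only [List.map_cons, List.map_nil, List.cons.injEq, and_true] at hmap
    obtain ⟨rfl, rfl, rfl⟩ := hmap
    have hx' := hc x' (hsl.subset (by simp))
    have hy' := hc y' (hsl.subset (by simp))
    have hz' := hc z' (hsl.subset (by simp))
    exact h x' y' z' hsl (by omega) (by omega)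

lemma av_append {A B : List ℕ} (hA : Av A) (hB : Av B)
    (hAB : ∀ x ∈ A, ∀ y ∈ B, y < x) :
    Av (A ++ 0 :: B) := by
  intro x y z hs hyx hxz
  rw [List.sublist_append_iff] at hs
  obtain ⟨s₁, s₂, heq, h₁, h₂⟩ := hs
  have hmemA : ∀ w ∈ s₁, w ∈ A := fun w hw => h₁.subset hw
  have hcons : ∀ {t : List ℕ}, t <+ 0 :: B → t <+ B ∨ ∃ r, t = 0 :: r ∧ r <+ B := by
    intro t ht
    rcases List.sublist_cons_iff.mp ht with h | ⟨r, rfl, hr⟩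
    · exact Or.inl h
    · exact Or.inr ⟨r, rfl, hr⟩
  match s₁, heq with
  | [], heq =>
    simp only [List.nil_append] at heq
    subst heq
    rcases hcons h₂ with h | ⟨r, hr, hrB⟩
    · exact hB x y z h hyx hxz
    · injection hr with h0 _; omega
  | [a], heq =>
    simp only [List.cons_append, List.nil_append, List.cons.injEq] at heq
    obtain ⟨rfl, heq⟩ := heq
    subst heq
    have hxA : x ∈ A := hmemA x (by simp)
    rcases hcons h₂ with h | ⟨r, hr, hrB⟩
    · have hzB : z ∈ B := h.subset (by simp)
      exact absurd hxz (by have := hAB x hxA z hzB; omega)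
    · injection hr with h0 hr'
      subst h0
      have hzB : z ∈ B := hrB.subset (by rw [← hr']; simp)
      exact absurd hxz (by have := hAB x hxA z hzB; omega)
  | [a, b], heq =>
    simp only [List.cons_append, List.nil_append, List.cons.injEq] at heq
    obtain ⟨rfl, rfl, heq⟩ := heq
    subst heq
    have hxA : x ∈ A := hmemA x (by simp)
    rcases hcons h₂ with h | ⟨r, hr, hrB⟩
    · have hzB : z ∈ B := h.subset (by simp)
      exact absurd hxz (by have := hAB x hxA z hzB; omega)
    · injection hr with h0 _
      omega
  | [a, b, c], heq =>
    simp only [List.cons_append, List.nil_append, List.cons.injEq] at heq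
    obtain ⟨rfl, rfl, rfl, heq⟩ := heq
    exact hA x y z h₁ hyx hxz

lemma perm_concat {n a : ℕ} (ha : a ≤ n) {A B : List ℕ}
    (hA : A ~ List.range a) (hB : B ~ List.range (n - a)) :
    (A.map (· + (n - a + 1)) ++ 0 :: B.map (· + 1)) ~ List.range (n + 1) := by
  set b := n - a with hb
  have h1 : A.map (· + (b + 1)) ++ 0 :: B.map (· + 1)
      ~ (List.range a).map (· + (b + 1)) ++ 0 :: (List.range b).map (· + 1) :=
    (hA.map _).append ((hB.map _).cons 0)
  refine h1.trans ?_
  have h2 : (List.range a).map (· + (b + 1)) ++ 0 :: (List.range b).map (· + 1)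
      ~ 0 :: ((List.range b).map (· + 1) ++ (List.range a).map (· + (b + 1))) :=
    List.perm_middle.trans (List.Perm.cons 0 List.perm_append_comm)
  refine h2.trans ?_
  have h3 : List.range (n + 1)
      = 0 :: ((List.range b).map (· + 1) ++ (List.range a).map (· + (b + 1))) := by
    rw [List.range_succ_eq_map]
    congr 1
    have hn : n = b + a := by omega
    rw [hn, List.range_add, List.map_append, List.map_map]
    congr 1
    all_goals apply List.map_congr_left
    all_goals intro x _
    all_goals simp only [Function.comp_apply, id_eq]
    all_goals omega
  rw [h3]

lemma av_concat {n a : ℕ} {A B : List ℕ}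
    (hA : A ~ List.range a) (hB : B ~ List.range (n - a))
    (avA : Av A) (avB : Av B) :
    Av (A.map (· + (n - a + 1)) ++ 0 :: B.map (· + 1)) := by
  apply av_append (av_map_add _ avA) (av_map_add _ avB)
  intro x hx y hy
  simp only [List.mem_map] at hx hy
  obtain ⟨x', hx', rfl⟩ := hx
  obtain ⟨y', hy', rfl⟩ := hy
  have : y' < n - a := by simpa using hB.subset hy'
  omega

lemma append_cons_zero_inj {A₁ B₁ A₂ B₂ : List ℕ}
    (h1 : 0 ∉ A₁) (h2 : 0 ∉ A₂) (h : A₁ ++ 0 :: B₁ = A₂ ++ 0 :: B₂) :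
    A₁ = A₂ ∧ B₁ = B₂ := by
  induction A₁ generalizing A₂ with
  | nil =>
    cases A₂ with
    | nil => simpa using h
    | cons a t =>
      simp only [List.nil_append, List.cons_append, List.cons.injEq] at h
      exact absurd (h.1 ▸ h2) (by simp)
  | cons a t ih =>
    cases A₂ with
    | nil =>
      simp only [List.cons_append, List.nil_append, List.cons.injEq] at h
      exact absurd (h.1 ▸ h1) (by simp)
    | cons a' t' =>
      simp only [List.cons_append, List.cons.injEq] at h
      obtain ⟨rfl, h⟩ := h
      have := ih (fun hh => h1 (List.mem_cons_of_mem _ hh)) (fun hh => h2 (List.mem_cons_of_mem _ hh)) h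
      exact ⟨by rw [this.1], this.2⟩

def F (n : ℕ) : (Σ k : Fin (n + 1), L k.val × L (n - k.val)) → L (n + 1) :=
  fun p =>
    ⟨p.2.1.1.map (· + (n - p.1.val + 1)) ++ 0 :: p.2.2.1.map (· + 1),
     perm_concat (by omega) p.2.1.2.1 p.2.2.2.1,
     av_concat p.2.1.2.1 p.2.2.2.1 p.2.1.2.2 p.2.2.2.2⟩

lemma F_bijective (n : ℕ) : Function.Bijective (F n) := by
  constructor
  · rintro ⟨k₁, ⟨A₁, hA₁, avA₁⟩, ⟨B₁, hB₁, avB₁⟩⟩ ⟨k₂, ⟨A₂, hA₂, avA₂⟩, ⟨B₂, hB₂, avB₂⟩⟩ h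
    have hval := congrArg Subtype.val h
    simp only [F] at hval
    have h0₁ : 0 ∉ A₁.map (· + (n - k₁.val + 1)) := by
      simp only [List.mem_map, not_exists]
      rintro x ⟨_, hx⟩; omega
    have h0₂ : 0 ∉ A₂.map (· + (n - k₂.val + 1)) := by
      simp only [List.mem_map, not_exists]
      rintro x ⟨_, hx⟩; omega
    obtain ⟨hAeq, hBeq⟩ := append_cons_zero_inj h0₁ h0₂ hval
    have hk : k₁ = k₂ := by
      apply Fin.ext
      have h1 : A₁.length = k₁.val := by rw [hA₁.length_eq, List.length_range]
      have h2 : A₂.length = k₂.val := by rw [hA₂.length_eq, List.length_range]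
      have := congrArg List.length hAeq
      simp only [List.length_map] at this
      omega
    subst hk
    have hA : A₁ = A₂ :=
      List.map_injective_iff.mpr (fun x y hxy => by omega) hAeq
    have hB : B₁ = B₂ :=
      List.map_injective_iff.mpr (fun x y hxy => by omega) hBeq
    subst hA; subst hB
    rfl
  · rintro ⟨l, hl, hav⟩
    have h0l : (0 : ℕ) ∈ l := hl.mem_iff.mpr (by simp)
    obtain ⟨A, B, rfl⟩ := List.append_of_mem h0l
    set a := A.length with hadef
    set b := B.length with hbdef
    have hnd : (A ++ 0 :: B).Nodup := hl.nodup_iff.mpr List.nodup_range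
    rw [List.nodup_append] at hnd
    obtain ⟨hndA, hndB0, hdisj⟩ := hnd
    have h0A : 0 ∉ A := fun h => hdisj 0 h 0 (by simp) rfl
    have h0B : 0 ∉ B := by
      have := hndB0
      simp only [List.nodup_cons] at this
      exact this.1
    have hndB : B.Nodup := by
      simp only [List.nodup_cons] at hndB0
      exact hndB0.2
    have hmem : ∀ x ∈ A ++ 0 :: B, x ≤ n := by
      intro x hx
      have := hl.subset hx
      simp only [List.mem_range] at this
      omega
    have hab : a + b = n := by
      have := hl.length_eq
      simp only [List.length_append, List.length_cons, List.length_range] at this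
      omega
    have key : ∀ x ∈ A, ∀ y ∈ B, y < x := by
      intro x hx y hy
      have hx0 : x ≠ 0 := fun h => h0A (h ▸ hx)
      have hxy : x ≠ y := fun h => hdisj x hx x (by simp [h, hy]) rfl
      by_contra hlt
      have hxy' : x < y := by omega
      apply hav x 0 y ?_ (by omega) hxy'
      exact (List.singleton_sublist.mpr hx).append ((List.singleton_sublist.mpr hy).cons₂ 0)
    have hBle : ∀ y ∈ B, 1 ≤ y ∧ y ≤ b := by
      intro y hy
      have hy0 : y ≠ 0 := fun h => h0B (h ▸ hy)
      refine ⟨by omega, ?_⟩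
      by_contra hgt
      have hyb : b + 1 ≤ y := by omega
      have hyn : y ≤ n := hmem y (by simp [hy])
      have hsub : Finset.Icc 1 (b + 1) ⊆ B.toFinset := by
        intro v hv
        simp only [Finset.mem_Icc] at hv
        rw [List.mem_toFinset]
        have hvl : v ∈ A ++ 0 :: B := by
          apply hl.mem_iff.mpr
          simp only [List.mem_range]
          omega
        rcases List.mem_append.mp hvl with hvA | hv0B
        · exact absurd (key v hvA y hy) (by omega)
        · rcases List.mem_cons.mp hv0B with h | h
          · omega
          · exact h
      have hcard := Finset.card_le_card hsub
      rw [Nat.card_Icc] at hcard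
      have := List.toFinset_card_le B
      omega
    have hBfin : B.toFinset = Finset.Icc 1 b := by
      apply Finset.eq_of_subset_of_card_le
      · intro v hv
        rw [List.mem_toFinset] at hv
        have := hBle v hv
        simp only [Finset.mem_Icc]
        omega
      · rw [Nat.card_Icc, List.toFinset_card_of_nodup hndB]
        omega
    have hAge : ∀ x ∈ A, b + 1 ≤ x ∧ x ≤ n := by
      intro x hx
      have hx0 : x ≠ 0 := fun h => h0A (h ▸ hx)
      refine ⟨?_, hmem x (by simp [hx])⟩
      by_contra hgt
      have : x ∈ B.toFinset := by
        rw [hBfin]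
        simp only [Finset.mem_Icc]
        omega
      rw [List.mem_toFinset] at this
      exact hdisj x hx x (by simp [this]) rfl
    have hAfin : A.toFinset = Finset.Icc (b + 1) n := by
      apply Finset.eq_of_subset_of_card_le
      · intro v hv
        rw [List.mem_toFinset] at hv
        have := hAge v hv
        simp only [Finset.mem_Icc]
        omega
      · rw [Nat.card_Icc, List.toFinset_card_of_nodup hndA]
        omega
    have hBperm : B ~ (List.range b).map (· + 1) := by
      apply List.perm_of_nodup_nodup_toFinset_eq hndB
      · exact (List.nodup_range : (List.range b).Nodup).map (fun x y h => by omega)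
      · rw [hBfin]
        ext v
        simp only [Finset.mem_Icc, List.mem_toFinset, List.mem_map, List.mem_range]
        constructor
        · intro hv; exact ⟨v - 1, by omega, by omega⟩
        · rintro ⟨w, hw, rfl⟩; omega
    have hAperm : A ~ (List.range a).map (· + (b + 1)) := by
      apply List.perm_of_nodup_nodup_toFinset_eq hndA
      · exact (List.nodup_range : (List.range a).Nodup).map (fun x y h => by omega)
      · rw [hAfin]
        ext v
        simp only [Finset.mem_Icc, List.mem_toFinset, List.mem_map, List.mem_range]
        constructor
        · intro hv; exact ⟨v - (b + 1), by omega, by omega⟩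
        · rintro ⟨w, hw, rfl⟩; omega
    have avA : Av A := av_sublist (List.sublist_append_left A (0 :: B)) hav
    have avB : Av B :=
      av_sublist ((List.sublist_cons_self 0 B).trans (List.sublist_append_right A (0 :: B))) hav
    have hA₀perm : A.map (· - (b + 1)) ~ List.range a := by
      have h1 := hAperm.map (· - (b + 1))
      rw [List.map_map] at h1
      have h2 : (List.range a).map ((· - (b + 1)) ∘ (· + (b + 1))) = List.range a := by
        have : (List.range a).map ((· - (b + 1)) ∘ (· + (b + 1))) = (List.range a).map id := by
          apply List.map_congr_left; intro x _; simp only [Function.comp_apply, id_eq]; omega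
        rw [this, List.map_id]
      rwa [h2] at h1
    have hB₀perm : B.map (· - 1) ~ List.range b := by
      have h1 := hBperm.map (· - 1)
      rw [List.map_map] at h1
      have h2 : (List.range b).map ((· - 1) ∘ (· + 1)) = List.range b := by
        have : (List.range b).map ((· - 1) ∘ (· + 1)) = (List.range b).map id := by
          apply List.map_congr_left; intro x _; simp only [Function.comp_apply, id_eq]; omega
        rw [this, List.map_id]
      rwa [h2] at h1
    have hA₀av : Av (A.map (· - (b + 1))) := av_map_sub _ (fun x hx => (hAge x hx).1) avA
    have hB₀av : Av (B.map (· - 1)) := av_map_sub _ (fun x hx => (hBle x hx).1) avB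
    have hnab : n - a = b := by omega
    refine ⟨⟨⟨a, by omega⟩, ⟨A.map (· - (b + 1)), by rw [hnab] at *; exact hA₀perm, hA₀av⟩,
      ⟨B.map (· - 1), by show B.map (· - 1) ~ List.range (n - a); rw [hnab]; exact hB₀perm,
        hB₀av⟩⟩, ?_⟩
    apply Subtype.ext
    show (A.map (· - (b + 1))).map (· + (n - a + 1)) ++ 0 :: (B.map (· - 1)).map (· + 1)
      = A ++ 0 :: B
    rw [hnab]
    congr 1
    · rw [List.map_map]
      have : A.map ((· + (b + 1)) ∘ (· - (b + 1))) = A.map id := by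
        apply List.map_congr_left
        intro x hx
        have := (hAge x hx).1
        simp only [Function.comp_apply, id_eq]
        omega
      rw [this, List.map_id]
    · congr 1
      rw [List.map_map]
      have : B.map ((· + 1) ∘ (· - 1)) = B.map id := by
        apply List.map_congr_left
        intro x hx
        have := (hBle x hx).1
        simp only [Function.comp_apply, id_eq]
        omega
      rw [this, List.map_id]


noncomputable instance (m : ℕ) : Finite (L m) := Finite.of_equiv _ (permEquivL m)
noncomputable def FB (n : ℕ) : (Σ k : Fin (n + 1), L k.val × L (n - k.val)) ≃ L (n + 1) :=
  Equiv.ofBijective (F n) (F_bijective n)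

lemma av_nil : Av [] := by
  intro x y z h _ _
  simp [List.sublist_nil] at h

instance : Unique (L 0) where
  default := ⟨[], by simp, av_nil⟩
  uniq := fun l => Subtype.ext (by
    have := l.2.1
    simpa [List.range_zero] using this)

lemma natcard_sigma {ι : Type*} [Fintype ι] (α : ι → Type*) [∀ i, Finite (α i)] :
    Nat.card (Σ i, α i) = ∑ i, Nat.card (α i) := by
  letI : ∀ i, Fintype (α i) := fun i => Fintype.ofFinite _
  simp [Nat.card_eq_fintype_card, Fintype.card_sigma]

noncomputable def c (n : ℕ) : ℕ := Nat.card (L n)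

lemma c_zero : c 0 = 1 := Nat.card_unique

lemma c_succ (n : ℕ) : c (n + 1) = ∑ i : Fin (n + 1), c i * c (n - i) := by
  have h1 : c (n + 1) = Nat.card (Σ k : Fin (n + 1), L k.val × L (n - k.val)) :=
    Nat.card_congr (FB n).symm
  rw [h1, natcard_sigma]
  exact Finset.sum_congr rfl fun i _ => by rw [Nat.card_prod]; rfl

lemma c_eq_catalan (n : ℕ) : c n = catalan n := by
  induction n using Nat.strong_induction_on with
  | _ n ih =>
    match n with
    | 0 => rw [c_zero, catalan_zero]
    | Nat.succ m =>
      rw [c_succ, catalan_succ]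
      exact Finset.sum_congr rfl fun i _ => by
        rw [ih i (by omega), ih (m - i) (by omega)]


end Avoid213

theorem avoid_213_eq_catalan (n : ℕ) :
    (Nat.card {σ : Equiv.Perm (Fin n) // ¬contains213 σ} : ℚ) =
      ((2 * n).choose n : ℚ) / (n + 1) := by
  have h1 : Nat.card {σ : Equiv.Perm (Fin n) // ¬contains213 σ} = catalan n := by
    rw [Nat.card_congr (Avoid213.permEquivL n)]
    exact Avoid213.c_eq_catalan n
  rw [h1, eq_div_iff (by positivity)]
  have := succ_mul_catalan_eq_centralBinom n
  rw [Nat.centralBinom] at this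
  push_cast [← this]
  ring
end

section
/- The partition function satisfies Euler's pentagonal number recurrence: for n ≥ 1, p(n) = ∑_{k≥1} (−1)^{k+1} [ p(n − k(3k−1)/2) + p(n − k(3k+1)/2) ], where p(m) = 0 for m < 0 and p(0) = 1. -/
/-- The partition function, extended by `p(m) = 0` for `m < 0`. -/
noncomputable def partitionFun (m : ℤ) : ℤ :=
  if m < 0 then 0 else Nat.card (Nat.Partition m.toNat)

open Multiset

namespace EulerPent

open scoped Classical

/-- generalized pentagonal numbers, `g j = j(3j+1)/2`. -/
def g (j : ℤ) : ℤ := j * (3 * j + 1) / 2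

lemma two_dvd_aux (j : ℤ) : (2 : ℤ) ∣ j * (3 * j + 1) := by
  rcases Int.even_or_odd j with ⟨k, hk⟩ | ⟨k, hk⟩
  · exact ⟨k * (3 * (k + k) + 1), by rw [hk]; ring⟩
  · exact ⟨(2 * k + 1) * (3 * k + 2), by rw [hk]; ring⟩

lemma two_g (j : ℤ) : 2 * g j = j * (3 * j + 1) :=
  Int.mul_ediv_cancel' (two_dvd_aux j)

lemma g_succ (j : ℤ) : g (j + 1) = g j + 3 * j + 2 := by
  have h1 := two_g j; have h2 := two_g (j + 1)
  have : (j+1) * (3*(j+1)+1) = j * (3*j+1) + 2*(3*j+2) := by ring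
  omega

lemma g_pred (j : ℤ) : g (j - 1) = g j - 3 * j + 1 := by
  have := g_succ (j - 1); simp only [sub_add_cancel] at this; omega

lemma g_zero : g 0 = 0 := rfl

lemma le_g (j : ℤ) : j ≤ g j := by
  have h := two_g j; nlinarith [sq_nonneg j, sq_nonneg (j - 1), sq_nonneg (j + 1)]

lemma neg_le_g (j : ℤ) : -j ≤ g j := by
  have h := two_g j; nlinarith [sq_nonneg j, sq_nonneg (j - 1), sq_nonneg (j + 1)]

lemma g_nonneg (j : ℤ) : 0 ≤ g j := by have := le_g j; have := neg_le_g j; omega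

lemma g_pos {j : ℤ} (hj : j ≠ 0) : 1 ≤ g j := by
  have := le_g j; have := neg_le_g j; omega

/-- positivity of all parts -/
def Pos (s : Multiset ℕ) : Prop := ∀ i ∈ s, 0 < i

lemma sup_mem {s : Multiset ℕ} (h : s ≠ 0) : s.sup ∈ s := by
  induction s using Multiset.induction_on with
  | empty => exact absurd rfl h
  | cons a t ih =>
    rw [Multiset.sup_cons]
    rcases eq_or_ne t 0 with rfl | ht
    · simp
    · rcases le_total a t.sup with h1 | h1
      · rw [sup_eq_right.2 h1]; exact Multiset.mem_cons_of_mem (ih ht)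
      · rw [sup_eq_left.2 h1]; exact Multiset.mem_cons_self _ _

lemma sum_filter_pos (X : Multiset ℕ) : (X.filter (0 < ·)).sum = X.sum := by
  conv_rhs => rw [← Multiset.filter_add_not (0 < ·) X]
  rw [Multiset.sum_add]
  have h0 : (X.filter (fun a => ¬ 0 < a)).sum = 0 := by
    apply Multiset.sum_eq_zero
    intro x hx
    have := Multiset.of_mem_filter hx
    omega
  rw [h0, add_zero]

lemma sum_map_succ (X : Multiset ℕ) :
    (X.map (· + 1)).sum = X.sum + Multiset.card X := by
  rw [Multiset.sum_map_add]
  simp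

lemma sum_map_pred {s : Multiset ℕ} (hs : Pos s) :
    (s.map (· - 1)).sum + Multiset.card s = s.sum := by
  have h : s.map (fun b => (b - 1) + 1) = s := by
    conv_rhs => rw [← Multiset.map_id s]
    exact Multiset.map_congr rfl (fun x hx => by have := hs x hx; simp only [id_eq]; omega)
  have h2 : ((s.map (· - 1)).map (· + 1)) = s := by rw [Multiset.map_map]; exact h
  calc (s.map (· - 1)).sum + Multiset.card s
      = ((s.map (· - 1)).map (· + 1)).sum := by rw [sum_map_succ, Multiset.card_map]
    _ = s.sum := by rw [h2]

/-- Condition selecting the "first" branch of the involution. -/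
def C1 (j : ℤ) (s : Multiset ℕ) : Prop :=
  3 * j + max (Multiset.card s : ℤ) 1 + 1 ≤ (s.sup : ℤ)

noncomputable def step1 (j : ℤ) (s : Multiset ℕ) : ℤ × Multiset ℕ :=
  (j + 1, (s.erase s.sup).map (· + 1) +
    Multiset.replicate ((s.sup : ℤ) - 3 * j - max (Multiset.card s : ℤ) 1 - 1).toNat 1)

noncomputable def step2 (j : ℤ) (s : Multiset ℕ) : ℤ × Multiset ℕ :=
  (j - 1, (s.map (· - 1) + {((Multiset.card s : ℤ) + 3 * j - 1).toNat}).filter (0 < ·))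

noncomputable def F (x : ℤ × Multiset ℕ) : ℤ × Multiset ℕ :=
  if C1 x.1 x.2 then step1 x.1 x.2 else step2 x.1 x.2


section Step1

variable {j : ℤ} {s : Multiset ℕ}

lemma card_pos_facts (hne : s ≠ 0) (hs : Pos s) :
    1 ≤ Multiset.card s ∧ s.sup ∈ s ∧ 0 < s.sup := by
  have h1 : s.sup ∈ s := sup_mem hne
  exact ⟨Multiset.card_pos.2 hne, h1, hs _ h1⟩

lemma step1_card (hC : C1 j s) :
    (Multiset.card (step1 j s).2 : ℤ) = (s.sup : ℤ) - 3 * j - 2 := by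
  simp only [step1, Multiset.card_add, Multiset.card_map, Multiset.card_replicate]
  rcases eq_or_ne s 0 with rfl | hne
  · simp only [C1, Multiset.card_zero, Nat.cast_zero, Multiset.sup_zero] at hC ⊢
    simp only [Multiset.erase_zero, Multiset.card_zero]
    have hb : ((⊥ : ℕ) : ℤ) = 0 := rfl
    rw [hb] at hC ⊢
    omega
  · have h1 : s.sup ∈ s := sup_mem hne
    have ht : 1 ≤ Multiset.card s := Multiset.card_pos.2 hne
    have hce : Multiset.card (s.erase s.sup) = Multiset.card s - 1 :=
      Multiset.card_erase_of_mem h1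
    simp only [C1] at hC
    have hmax : max (Multiset.card s : ℤ) 1 = (Multiset.card s : ℤ) := by
      rw [max_eq_left]; exact_mod_cast ht
    rw [hmax] at hC
    rw [hce, hmax]
    omega

lemma step1_pos : Pos (step1 j s).2 := by
  intro i hi
  simp only [step1] at hi
  rcases Multiset.mem_add.1 hi with h | h
  · obtain ⟨b, _, rfl⟩ := Multiset.mem_map.1 h
    omega
  · rw [Multiset.eq_of_mem_replicate h]; norm_num

lemma step1_sum (hC : C1 j s) :
    (((step1 j s).2.sum : ℤ)) + g ((step1 j s).1) = (s.sum : ℤ) + g j := by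
  have hg : g (j + 1) = g j + 3 * j + 2 := g_succ j
  simp only [step1, Multiset.sum_add, sum_map_succ, Multiset.sum_replicate, smul_eq_mul, mul_one]
  rcases eq_or_ne s 0 with rfl | hne
  · simp only [C1, Multiset.card_zero, Nat.cast_zero, Multiset.sup_zero] at hC ⊢
    have hb : ((⊥ : ℕ) : ℤ) = 0 := rfl
    rw [hb] at hC
    simp only [Multiset.erase_zero, Multiset.sum_zero, Multiset.card_zero]
    have hb2 : (⊥ : ℕ) = 0 := rfl
    rw [hb2]
    push_cast
    omega
  · have h1 : s.sup ∈ s := sup_mem hne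
    have ht : 1 ≤ Multiset.card s := Multiset.card_pos.2 hne
    have hce : Multiset.card (s.erase s.sup) = Multiset.card s - 1 :=
      Multiset.card_erase_of_mem h1
    have hsum : s.sup + (s.erase s.sup).sum = s.sum := by
      conv_rhs => rw [← Multiset.cons_erase h1]
      rw [Multiset.sum_cons]
    simp only [C1] at hC
    have hmax : max (Multiset.card s : ℤ) 1 = (Multiset.card s : ℤ) := by
      rw [max_eq_left]; exact_mod_cast ht
    rw [hmax] at hC ⊢
    omega

lemma step1_sup_le : ((step1 j s).2.sup : ℤ) ≤ (s.sup : ℤ) + 1 := by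
  have h : (step1 j s).2.sup ≤ s.sup + 1 := by
    apply Multiset.sup_le.2
    intro b hb
    simp only [step1] at hb
    rcases Multiset.mem_add.1 hb with h | h
    · obtain ⟨x, hx, rfl⟩ := Multiset.mem_map.1 h
      have := Multiset.le_sup (Multiset.mem_of_mem_erase hx)
      omega
    · rw [Multiset.eq_of_mem_replicate h]; omega
  exact_mod_cast h

lemma step1_not_C1 (hC : C1 j s) : ¬ C1 (j + 1) (step1 j s).2 := by
  intro h
  have hcard := step1_card hC
  have hsup := step1_sup_le (j := j) (s := s)
  simp only [C1] at h
  have h1 : ((s.sup : ℤ) - 3 * j - 2) ≤ max ((Multiset.card (step1 j s).2 : ℤ)) 1 := by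
    rw [hcard] at *
    exact le_max_left _ _
  have h2 : max ((Multiset.card (step1 j s).2 : ℤ)) 1 ≤
      max ((s.sup : ℤ) - 3 * j - 2) 1 := by rw [hcard]
  have h3 := le_max_left ((s.sup : ℤ) - 3 * j - 2) 1
  have h4 := le_max_right ((s.sup : ℤ) - 3 * j - 2) 1
  have h5 := max_le_iff.1 h2
  omega

lemma step1_step2 (hC : C1 j s) (hs : Pos s) :
    step2 (j + 1) (step1 j s).2 = (j, s) := by
  have hcard := step1_card hC
  have hnew : ((Multiset.card (step1 j s).2 : ℤ) + 3 * (j + 1) - 1).toNat = s.sup := by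
    omega
  simp only [step2, hnew]
  refine Prod.ext (by omega) ?_
  show ((step1 j s).2.map (· - 1) + {s.sup}).filter (0 < ·) = s
  have hmap : (step1 j s).2.map (· - 1) =
      s.erase s.sup + Multiset.replicate ((s.sup : ℤ) - 3 * j - max (Multiset.card s : ℤ) 1 - 1).toNat 0 := by
    simp only [step1, Multiset.map_add, Multiset.map_map, Multiset.map_replicate]
    congr 1
    · conv_rhs => rw [← Multiset.map_id (s.erase s.sup)]
      exact Multiset.map_congr rfl (fun x _ => by simp only [Function.comp_apply, id_eq]; omega)
  rw [hmap, Multiset.filter_add, Multiset.filter_add]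
  have h1 : (s.erase s.sup).filter (0 < ·) = s.erase s.sup :=
    Multiset.filter_eq_self.2 (fun b hb => hs b (Multiset.mem_of_mem_erase hb))
  have h2 : (Multiset.replicate ((s.sup : ℤ) - 3 * j - max (Multiset.card s : ℤ) 1 - 1).toNat (0:ℕ)).filter (0 < ·) = 0 :=
    Multiset.filter_eq_nil.2 (fun b hb => by rw [Multiset.eq_of_mem_replicate hb]; omega)
  rw [h1, h2, add_zero]
  rcases eq_or_ne s 0 with rfl | hne
  · have hb2 : (Multiset.sup (0 : Multiset ℕ)) = 0 := rfl
    rw [hb2]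
    simp [Multiset.filter_singleton]
  · have h3 : s.sup ∈ s := sup_mem hne
    have h4 : (0:ℕ) < s.sup := hs _ h3
    rw [Multiset.filter_singleton, if_pos h4]
    rw [add_comm, Multiset.singleton_add, Multiset.cons_erase h3]

end Step1


section Step2

variable {j : ℤ} {s : Multiset ℕ}

lemma step2_facts (hn : ¬ C1 j s) (hs : Pos s) (h0 : s = 0 → j ≠ 0) :
    0 ≤ (Multiset.card s : ℤ) + 3 * j - 1 ∧ (s.sup : ℤ) ≤ (Multiset.card s : ℤ) + 3 * j := by
  simp only [C1, not_le] at hn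
  rcases eq_or_ne s 0 with rfl | hne
  · have hj := h0 rfl
    simp only [Multiset.card_zero, Nat.cast_zero, Multiset.sup_zero] at hn ⊢
    have hb : ((⊥ : ℕ) : ℤ) = 0 := rfl
    rw [hb] at hn
    have h1 := le_max_right (0 : ℤ) 1
    have h2 : max (0:ℤ) 1 = 1 := by norm_num
    rw [h2] at hn
    omega
  · have h1 : s.sup ∈ s := sup_mem hne
    have h2 : 0 < s.sup := hs _ h1
    have ht : 1 ≤ Multiset.card s := Multiset.card_pos.2 hne
    have hmax : max (Multiset.card s : ℤ) 1 = (Multiset.card s : ℤ) := by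
      rw [max_eq_left]; exact_mod_cast ht
    rw [hmax] at hn
    omega

lemma step2_pos : Pos (step2 j s).2 := fun _ hi => Multiset.of_mem_filter hi

lemma step2_sum (hn : ¬ C1 j s) (hs : Pos s) (h0 : s = 0 → j ≠ 0) :
    (((step2 j s).2.sum : ℤ)) + g ((step2 j s).1) = (s.sum : ℤ) + g j := by
  obtain ⟨hp0, -⟩ := step2_facts hn hs h0
  have hg : g (j - 1) = g j - 3 * j + 1 := g_pred j
  have hmp := sum_map_pred hs
  simp only [step2, sum_filter_pos, Multiset.sum_add, Multiset.sum_singleton]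
  omega

lemma step2_inv (hn : ¬ C1 j s) (hs : Pos s) (h0 : s = 0 → j ≠ 0) :
    C1 (j - 1) (step2 j s).2 ∧ step1 (j - 1) (step2 j s).2 = (j, s) := by
  obtain ⟨hp0, ha⟩ := step2_facts hn hs h0
  set t := Multiset.card s with htdef
  set p : ℕ := ((t : ℤ) + 3 * j - 1).toNat with hpdef
  have hpcast : (p : ℤ) = (t : ℤ) + 3 * j - 1 := Int.toNat_of_nonneg hp0
  have hsup_le : ∀ b ∈ s, b ≤ p + 1 := by
    intro b hb
    have h1 := Multiset.le_sup hb
    omega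
  rcases Nat.eq_zero_or_pos p with hp | hp
  · -- p = 0 : all parts are 1, ν = 0
    have h31 : (t : ℤ) + 3 * j = 1 := by omega
    have ht1 : 1 ≤ t := by by_contra h; push_neg at h; interval_cases t <;> omega
    have hrep : s = Multiset.replicate t 1 := by
      rw [Multiset.eq_replicate]
      refine ⟨rfl, fun b hb => ?_⟩
      have := hs b hb
      have := hsup_le b hb
      omega
    have hnu : (step2 j s).2 = 0 := by
      simp only [step2]
      apply Multiset.filter_eq_nil.2
      intro b hb
      rcases Multiset.mem_add.1 hb with h | h
      · obtain ⟨x, hx, rfl⟩ := Multiset.mem_map.1 h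
        rw [hrep] at hx
        rw [Multiset.eq_of_mem_replicate hx]
        omega
      · rw [Multiset.mem_singleton.1 h, ← hpdef, hp]
        omega
    constructor
    · rw [hnu]
      simp only [C1, Multiset.card_zero, Nat.cast_zero, Multiset.sup_zero]
      have hb : ((⊥ : ℕ) : ℤ) = 0 := rfl
      rw [hb]
      have h2 : max (0:ℤ) 1 = 1 := by norm_num
      rw [h2]
      omega
    · rw [hnu]
      simp only [step1, Multiset.erase_zero, Multiset.map_zero, zero_add, Multiset.card_zero,
        Nat.cast_zero, Multiset.sup_zero]
      have hb : (((⊥ : ℕ)) : ℤ) = 0 := rfl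
      rw [hb]
      have hcount : ((0:ℤ) - 3 * (j - 1) - max (0:ℤ) 1 - 1).toNat = t := by
        have h2 : max (0:ℤ) 1 = 1 := by norm_num
        rw [h2]; omega
      rw [hcount]
      exact Prod.ext (by omega) hrep.symm
  · -- p ≥ 1
    have hXdef : (step2 j s).2 = (s.map (· - 1)).filter (0 < ·) + {p} := by
      simp only [step2, Multiset.filter_add, Multiset.filter_singleton, ← htdef, ← hpdef, if_pos hp]
    set X := (s.map (· - 1)).filter (0 < ·) with hXd
    have hX : X = (s.filter (fun b => 2 ≤ b)).map (· - 1) := by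
      rw [hXd, Multiset.filter_map]
      congr 1
      apply Multiset.filter_congr
      intro b _
      simp only [Function.comp_apply]
      omega
    have hsupnu : (step2 j s).2.sup = p := by
      apply le_antisymm
      · apply Multiset.sup_le.2
        intro b hb
        rw [hXdef] at hb
        rcases Multiset.mem_add.1 hb with h | h
        · rw [hX] at h
          obtain ⟨y, hy, rfl⟩ := Multiset.mem_map.1 h
          have hy2 := Multiset.mem_of_mem_filter hy
          have := hsup_le y hy2
          omega
        · rw [Multiset.mem_singleton.1 h]
      · apply Multiset.le_sup
        rw [hXdef]
        exact Multiset.mem_add.2 (Or.inr (Multiset.mem_singleton_self p))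
    set r := Multiset.card (s.filter (fun b => 2 ≤ b)) with hrdef
    have hcardnu : Multiset.card (step2 j s).2 = r + 1 := by
      rw [hXdef, Multiset.card_add, Multiset.card_singleton, hX, Multiset.card_map]
    have hrt : r ≤ t := by
      rw [hrdef, htdef]
      exact Multiset.card_le_card (Multiset.filter_le _ s)
    have hones : s.filter (fun b => ¬ 2 ≤ b) = Multiset.replicate (t - r) 1 := by
      rw [Multiset.eq_replicate]
      constructor
      · have := Multiset.filter_add_not (fun b => 2 ≤ b) s
        have hcc : r + Multiset.card (s.filter (fun b => ¬ 2 ≤ b)) = t := by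
          rw [hrdef, htdef]
          conv_rhs => rw [← this]
          rw [Multiset.card_add]
        omega
      · intro b hb
        have h1 := Multiset.of_mem_filter hb
        have h2 := hs b (Multiset.mem_of_mem_filter hb)
        omega
    have hmaxnu : max ((Multiset.card (step2 j s).2 : ℤ)) 1 = (r : ℤ) + 1 := by
      rw [hcardnu]
      push_cast
      rw [max_eq_left]
      omega
    constructor
    · simp only [C1, hmaxnu, hsupnu]
      omega
    · simp only [step1, hsupnu, hmaxnu]
      refine Prod.ext (by omega) ?_
      show ((step2 j s).2.erase p).map (· + 1) +
          Multiset.replicate ((p : ℤ) - 3 * (j - 1) - ((r : ℤ) + 1) - 1).toNat 1 = s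
      have herase : (step2 j s).2.erase p = X := by
        rw [hXdef, Multiset.erase_add_right_pos X (Multiset.mem_singleton_self p),
          Multiset.erase_singleton, add_zero]
      have hmapX : X.map (· + 1) = s.filter (fun b => 2 ≤ b) := by
        rw [hX, Multiset.map_map]
        have hc : ∀ x ∈ s.filter (fun b => 2 ≤ b), ((· + 1) ∘ (· - 1)) x = id x := fun x hx => by
          have := Multiset.of_mem_filter hx
          simp only [Function.comp_apply, id_eq]
          omega
        rw [Multiset.map_congr rfl hc, Multiset.map_id]
      have hcount2 : ((p : ℤ) - 3 * (j - 1) - ((r : ℤ) + 1) - 1).toNat = t - r := by omega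
      rw [herase, hmapX, hcount2, ← hones]
      exact Multiset.filter_add_not _ s

end Step2


section Fprops

lemma step1_fst (j : ℤ) (s : Multiset ℕ) : (step1 j s).1 = j + 1 := rfl
lemma step2_fst (j : ℤ) (s : Multiset ℕ) : (step2 j s).1 = j - 1 := rfl

variable {x : ℤ × Multiset ℕ}

lemma F_F (hs : Pos x.2) (h0 : x.2 = 0 → x.1 ≠ 0) : F (F x) = x := by
  obtain ⟨j, s⟩ := x
  simp only [F]
  by_cases h : C1 j s
  · rw [if_pos h]
    simp only [step1_fst]
    simp only [step1_not_C1 h, ↓reduceIte]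
    exact step1_step2 h hs
  · rw [if_neg h]
    simp only [step2_fst]
    obtain ⟨hc, hinv⟩ := step2_inv h hs h0
    simp only [hc, ↓reduceIte]
    exact hinv

lemma F_pos (hs : Pos x.2) : Pos (F x).2 := by
  obtain ⟨j, s⟩ := x
  simp only [F]
  by_cases h : C1 j s
  · rw [if_pos h]; exact step1_pos
  · rw [if_neg h]; exact step2_pos

lemma F_sum (hs : Pos x.2) (h0 : x.2 = 0 → x.1 ≠ 0) :
    (((F x).2.sum : ℤ)) + g ((F x).1) = (x.2.sum : ℤ) + g x.1 := by
  obtain ⟨j, s⟩ := x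
  simp only [F]
  by_cases h : C1 j s
  · rw [if_pos h]; exact step1_sum h
  · rw [if_neg h]; exact step2_sum h hs h0

lemma F_fst : (F x).1 = x.1 + 1 ∨ (F x).1 = x.1 - 1 := by
  obtain ⟨j, s⟩ := x
  simp only [F]
  by_cases h : C1 j s
  · rw [if_pos h]; exact Or.inl rfl
  · rw [if_neg h]; exact Or.inr rfl

end Fprops

section Count

/-- the finset of multisets of parts of partitions of `m` -/
noncomputable def M (m : ℕ) : Finset (Multiset ℕ) :=
  Finset.univ.image (fun p : Nat.Partition m => p.parts)

lemma mem_M {m : ℕ} {s : Multiset ℕ} : s ∈ M m ↔ s.sum = m ∧ Pos s := by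
  constructor
  · rintro hs
    obtain ⟨p, -, rfl⟩ := Finset.mem_image.1 hs
    exact ⟨p.parts_sum, fun i hi => p.parts_pos hi⟩
  · rintro ⟨h1, h2⟩
    exact Finset.mem_image.2 ⟨⟨s, fun hi => h2 _ hi, h1⟩, Finset.mem_univ _, rfl⟩

lemma card_M (m : ℕ) : ((M m).card : ℤ) = Nat.card (Nat.Partition m) := by
  rw [Nat.card_eq_fintype_card, ← Finset.card_univ]
  norm_cast
  exact Finset.card_image_of_injective _ (fun p q h => Nat.Partition.ext h)

/-- the pairs `(j, partition of n - g j)` with `j` satisfying `P` -/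
noncomputable def A (n : ℕ) (P : ℤ → Prop) : Finset ((_ : ℤ) × Multiset ℕ) :=
  ((Finset.Icc (-(n:ℤ)) (n:ℤ)).filter (fun j => P j ∧ g j ≤ (n:ℤ))).sigma
    (fun j => M ((n : ℤ) - g j).toNat)

lemma mem_A {n : ℕ} {P : ℤ → Prop} {x : (_ : ℤ) × Multiset ℕ} :
    x ∈ A n P ↔ (x.1 ∈ Finset.Icc (-(n:ℤ)) (n:ℤ) ∧ (P x.1 ∧ g x.1 ≤ (n:ℤ))) ∧
      x.2 ∈ M ((n : ℤ) - g x.1).toNat := by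
  rw [A, Finset.mem_sigma, Finset.mem_filter]

lemma mem_A_props {n : ℕ} (hn : 1 ≤ n) {P : ℤ → Prop} {x : (_ : ℤ) × Multiset ℕ}
    (hx : x ∈ A n P) :
    Pos x.2 ∧ (x.2 = 0 → x.1 ≠ 0) ∧ ((x.2.sum : ℤ) + g x.1 = (n : ℤ)) := by
  obtain ⟨⟨-, -, hle⟩, hM⟩ := mem_A.1 hx
  obtain ⟨hsum, hpos⟩ := mem_M.1 hM
  have hsum' : (x.2.sum : ℤ) + g x.1 = (n : ℤ) := by
    have : ((((n : ℤ) - g x.1).toNat : ℤ)) = (n : ℤ) - g x.1 := by omega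
    omega
  refine ⟨hpos, ?_, hsum'⟩
  intro h2
  rw [h2] at hsum'
  simp only [Multiset.sum_zero, Nat.cast_zero, zero_add] at hsum'
  intro h1
  rw [h1, g_zero] at hsum'
  omega

/-- the involution on sigma pairs -/
noncomputable def FS (x : (_ : ℤ) × Multiset ℕ) : (_ : ℤ) × Multiset ℕ :=
  ⟨(F (x.1, x.2)).1, (F (x.1, x.2)).2⟩

lemma FS_FS {x : (_ : ℤ) × Multiset ℕ} (hs : Pos x.2) (h0 : x.2 = 0 → x.1 ≠ 0) :
    FS (FS x) = x := by
  obtain ⟨j, s⟩ := x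
  have h := F_F (x := (j, s)) hs h0
  simp only [FS, Prod.mk.eta]
  rw [h]

lemma F_mem {n : ℕ} (hn : 1 ≤ n) {P Q : ℤ → Prop} {x : (_ : ℤ) × Multiset ℕ}
    (hx : x ∈ A n P) (hQ : Q ((FS x).1)) : FS x ∈ A n Q := by
  obtain ⟨hpos, h0, hsum⟩ := mem_A_props hn hx
  obtain ⟨j, s⟩ := x
  dsimp only at hpos h0 hsum
  have hFsum := F_sum (x := (j, s)) hpos h0
  have hFpos := F_pos (x := (j, s)) hpos
  dsimp only at hFsum
  have hFS1 : (FS ⟨j, s⟩).1 = (F (j, s)).1 := rfl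
  have hFS2 : (FS ⟨j, s⟩).2 = (F (j, s)).2 := rfl
  have hsum0 : (0:ℤ) ≤ ((F (j, s)).2.sum : ℤ) := by positivity
  have hgle : g ((FS ⟨j, s⟩).1) ≤ (n : ℤ) := by rw [hFS1]; omega
  refine mem_A.2 ⟨⟨?_, hQ, hgle⟩, ?_⟩
  · rw [Finset.mem_Icc, hFS1]
    have h1 := le_g ((F (j, s)).1)
    have h2 := neg_le_g ((F (j, s)).1)
    rw [hFS1] at hgle
    omega
  · refine mem_M.2 ⟨?_, by rw [hFS2]; exact hFpos⟩
    rw [hFS1, hFS2]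
    rw [hFS1] at hgle
    omega

lemma card_A_eq {n : ℕ} (hn : 1 ≤ n) :
    (A n (fun j => Even j)).card = (A n (fun j => Odd j)).card := by
  have hpar : ∀ j : ℤ, (Even j → Odd (j+1) ∧ Odd (j-1)) ∧ (Odd j → Even (j+1) ∧ Even (j-1)) := by
    intro j
    constructor
    · intro h
      rw [Int.even_iff] at h
      rw [Int.odd_iff, Int.odd_iff]
      omega
    · intro h
      rw [Int.odd_iff] at h
      rw [Int.even_iff, Int.even_iff]
      omega
  have hfst : ∀ x : (_ : ℤ) × Multiset ℕ, (FS x).1 = x.1 + 1 ∨ (FS x).1 = x.1 - 1 := by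
    intro ⟨j, s⟩
    exact F_fst (x := (j, s))
  refine Finset.card_bij' (fun x _ => FS x) (fun x _ => FS x) ?_ ?_ ?_ ?_
  · intro x hx
    apply F_mem hn hx
    obtain ⟨⟨-, hP, -⟩, -⟩ := mem_A.1 hx
    rcases hfst x with h | h <;> rw [h]
    · exact ((hpar x.1).1 hP).1
    · exact ((hpar x.1).1 hP).2
  · intro x hx
    apply F_mem hn hx
    obtain ⟨⟨-, hP, -⟩, -⟩ := mem_A.1 hx
    rcases hfst x with h | h <;> rw [h]
    · exact ((hpar x.1).2 hP).1
    · exact ((hpar x.1).2 hP).2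
  · intro x hx
    obtain ⟨hpos, h0, -⟩ := mem_A_props hn hx
    exact FS_FS hpos h0
  · intro x hx
    obtain ⟨hpos, h0, -⟩ := mem_A_props hn hx
    exact FS_FS hpos h0

end Count


section Assemble

lemma key_sum {n : ℕ} (P : ℤ → Prop) :
    ∑ j ∈ (Finset.Icc (-(n:ℤ)) (n:ℤ)).filter P, partitionFun ((n:ℤ) - g j) =
      ((A n P).card : ℤ) := by
  classical
  rw [A, Finset.card_sigma]
  rw [← Finset.sum_subset
    (Finset.monotone_filter_right (Finset.Icc (-(n:ℤ)) (n:ℤ))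
      (fun j _ (hj : P j ∧ g j ≤ (n:ℤ)) => hj.1))
    (fun j hj hj2 => ?_)]
  · push_cast
    apply Finset.sum_congr rfl
    intro j hj
    obtain ⟨-, -, hle⟩ := Finset.mem_filter.1 hj
    rw [partitionFun, if_neg (by omega), ← card_M]
  · obtain ⟨hIcc, hP⟩ := Finset.mem_filter.1 hj
    have hgt : ¬ g j ≤ (n:ℤ) := by
      intro hle
      exact hj2 (Finset.mem_filter.2 ⟨hIcc, hP, hle⟩)
    rw [partitionFun, if_pos (by omega)]

lemma sum_pm {n : ℕ} (hn : 1 ≤ n) :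
    ∑ j ∈ Finset.Icc (-(n:ℤ)) (n:ℤ), (-1:ℤ) ^ j.natAbs * partitionFun ((n:ℤ) - g j) = 0 := by
  classical
  rw [← Finset.sum_filter_add_sum_filter_not (Finset.Icc (-(n:ℤ)) (n:ℤ)) (fun j => Even j)]
  have hE : ∑ j ∈ (Finset.Icc (-(n:ℤ)) (n:ℤ)).filter (fun j => Even j),
      (-1:ℤ) ^ j.natAbs * partitionFun ((n:ℤ) - g j)
      = ((A n (fun j => Even j)).card : ℤ) := by
    have hks := key_sum (n := n) (fun j => Even j)
    rw [Finset.filter_congr_decidable] at hks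
    rw [← hks]
    refine Finset.sum_congr rfl fun j hj => ?_
    have he : Even j := (Finset.mem_filter.1 hj).2
    rw [Even.neg_one_pow (Int.natAbs_even.2 he), one_mul]
  have hO : ∑ j ∈ (Finset.Icc (-(n:ℤ)) (n:ℤ)).filter (fun j => ¬ Even j),
      (-1:ℤ) ^ j.natAbs * partitionFun ((n:ℤ) - g j)
      = -(((A n (fun j => Odd j)).card : ℤ)) := by
    have hfe : (Finset.Icc (-(n:ℤ)) (n:ℤ)).filter (fun j => ¬ Even j)
        = (Finset.Icc (-(n:ℤ)) (n:ℤ)).filter (fun j => Odd j) := by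
      apply Finset.filter_congr
      intro j _
      simp [Int.not_even_iff_odd]
    have hks := key_sum (n := n) (fun j => Odd j)
    rw [Finset.filter_congr_decidable] at hks
    rw [hfe, ← hks, ← Finset.sum_neg_distrib]
    refine Finset.sum_congr rfl fun j hj => ?_
    have ho : Odd j := (Finset.mem_filter.1 hj).2
    rw [Odd.neg_one_pow (Int.natAbs_odd.2 ho)]
    ring
  rw [hE, hO, card_A_eq hn]
  ring

end Assemble

end EulerPent

theorem euler_pentagonal_recurrence (n : ℤ) (hn : 1 ≤ n) :
    partitionFun n =
      ∑ k ∈ Finset.Icc (1 : ℤ) n,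
        (-1 : ℤ) ^ (k.toNat + 1) *
          (partitionFun (n - k * (3 * k - 1) / 2) + partitionFun (n - k * (3 * k + 1) / 2)) := by
  classical
  open EulerPent in
  set N : ℕ := n.toNat with hNdef
  have hN : (N : ℤ) = n := Int.toNat_of_nonneg (by omega)
  have hN1 : 1 ≤ N := by omega
  have hS := sum_pm hN1
  rw [hN] at hS
  set f : ℤ → ℤ := fun j => (-1:ℤ) ^ j.natAbs * partitionFun (n - g j) with hfdef
  -- decompose the symmetric sum
  have hsplit : Finset.Icc (-n) n = ((Finset.Icc (1:ℤ) n).image (fun k => -k)) ∪ Finset.Icc 0 n := by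
    ext x
    simp only [Finset.mem_Icc, Finset.mem_union, Finset.mem_image]
    constructor
    · rintro ⟨h1, h2⟩
      rcases lt_or_ge x 0 with h | h
      · exact Or.inl ⟨-x, by omega, by omega⟩
      · exact Or.inr ⟨h, h2⟩
    · rintro (⟨k, ⟨hk1, hk2⟩, rfl⟩ | ⟨h1, h2⟩) <;> omega
  have hdisj : Disjoint ((Finset.Icc (1:ℤ) n).image (fun k => -k)) (Finset.Icc 0 n) := by
    rw [Finset.disjoint_left]
    rintro x hx hx2
    obtain ⟨k, hk, rfl⟩ := Finset.mem_image.1 hx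
    rw [Finset.mem_Icc] at hk hx2
    omega
  have himg : ∑ x ∈ (Finset.Icc (1:ℤ) n).image (fun k => -k), f x
      = ∑ k ∈ Finset.Icc (1:ℤ) n, f (-k) :=
    Finset.sum_image (fun a _ b _ h => by omega)
  have h0n : Finset.Icc (0:ℤ) n = insert 0 (Finset.Icc 1 n) := by
    ext x
    simp only [Finset.mem_Icc, Finset.mem_insert]
    omega
  have h0notin : (0:ℤ) ∉ Finset.Icc (1:ℤ) n := by simp
  have hdecomp : ∑ j ∈ Finset.Icc (-n) n, f j
      = ∑ k ∈ Finset.Icc (1:ℤ) n, f (-k) + (f 0 + ∑ k ∈ Finset.Icc (1:ℤ) n, f k) := by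
    rw [hsplit, Finset.sum_union hdisj, himg, h0n, Finset.sum_insert h0notin]
  have hf0 : f 0 = partitionFun n := by
    simp only [hfdef, Int.natAbs_zero, pow_zero, one_mul, g_zero, sub_zero]
  have hterm : ∀ k ∈ Finset.Icc (1:ℤ) n,
      (-1 : ℤ) ^ (k.toNat + 1) *
        (partitionFun (n - k * (3 * k - 1) / 2) + partitionFun (n - k * (3 * k + 1) / 2))
      = -(f (-k) + f k) := by
    intro k hk
    rw [Finset.mem_Icc] at hk
    have hg1 : k * (3 * k - 1) / 2 = g (-k) := by
      rw [g]
      congr 1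
      ring
    have hg2 : k * (3 * k + 1) / 2 = g k := rfl
    have habs : (-k).natAbs = k.natAbs := Int.natAbs_neg k
    have hpow : (-1 : ℤ) ^ (k.toNat + 1) = -((-1:ℤ) ^ k.natAbs) := by
      have : k.toNat = k.natAbs := by omega
      rw [this, pow_succ]
      ring
    rw [hg1, hg2, hpow, hfdef]
    simp only [habs]
    ring
  rw [Finset.sum_congr rfl hterm, Finset.sum_neg_distrib]
  have : ∑ j ∈ Finset.Icc (-n) n, f j = 0 := hS
  rw [hdecomp, hf0] at this
  rw [Finset.sum_add_distrib]
  linarith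
end
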